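/- arXiv:0711.0802 — 4 statements merged into one kernel-verified Lean document; each statement's English description precedes it below -/
import Mathlib

section
/- Let T : 𝕋 → 𝕋 be an orientation-preserving Lipschitz expanding map, F a flower for T, and f : 𝕋 → ℝ a Lipschitz function. If f can be Lipschitz flattened on F, then there is a unique Lipschitz coboundary g (i.e. g = φ − φ∘T with φ : 𝕋 → ℝ Lipschitz) such that (f+g) restricted to F is constant; moreover the function φ is uniquely determined up to an additive constant, its derivative being given Lebesgue-a.e. by φ' = Σ_{n≥1} (f∘τⁿ)', where τ is a pre-image selector associated to F. -/
open Filter MeasureTheory Set Topology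
open scoped ENNReal NNReal

noncomputable section

/-- The circle `𝕋 = ℝ/ℤ`, with its quotient metric and normalised Lebesgue (Haar) measure. -/
abbrev 𝕋 := UnitAddCircle

/-- The representative in `[0,1)` of a point of the circle. -/
def rep01 (z : 𝕋) : ℝ := ((AddCircle.equivIco 1 0) z : ℝ)

/-- The representative in `[-1/2,1/2)` of a point of the circle. -/
def repSym (z : 𝕋) : ℝ := ((AddCircle.equivIco 1 (-(1/2))) z : ℝ)

/-- The length of the positively oriented (counterclockwise) arc from `a` to `b`. -/
def arcLen (a b : 𝕋) : ℝ := rep01 (b - a)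

/-- The closed positively oriented arc (closed interval) from `a` to `b`. -/
def arc (a b : 𝕋) : Set 𝕋 := (fun t : ℝ => a + (t : 𝕋)) '' Set.Icc 0 (arcLen a b)

/-- The open positively oriented arc (open interval) from `a` to `b`. -/
def openArc (a b : 𝕋) : Set 𝕋 := (fun t : ℝ => a + (t : 𝕋)) '' Set.Ioo 0 (arcLen a b)

/-- `T` is expanding with constant `K`: nearby points have their distance
multiplied by at least `K`. -/
def ExpandingWith (T : 𝕋 → 𝕋) (K : ℝ) : Prop :=
  ∃ ε : ℝ, 0 < ε ∧ ∀ x y : 𝕋, dist x y < ε → K * dist x y ≤ dist (T x) (T y)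

/-- `T` is a (continuous) expanding map of the circle. -/
def Expanding (T : 𝕋 → 𝕋) : Prop :=
  Continuous T ∧ ∃ K : ℝ, 1 < K ∧ ExpandingWith T K

/-- `G : ℝ → ℝ` is a (continuous) lift of the circle map `T`. -/
def IsLift (T : 𝕋 → 𝕋) (G : ℝ → ℝ) : Prop :=
  Continuous G ∧ ∀ t : ℝ, T ((t : ℝ) : 𝕋) = ((G t : ℝ) : 𝕋)

/-- The circle map `T` has degree `k`. -/
def HasDegree (T : 𝕋 → 𝕋) (k : ℤ) : Prop :=
  ∃ G : ℝ → ℝ, IsLift T G ∧ ∀ t : ℝ, G (t + 1) = G t + k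

/-- A Lipschitz self-map of the circle. -/
def LipschitzCirc (T : 𝕋 → 𝕋) : Prop := ∃ C : ℝ≥0, LipschitzWith C T

/-- A real-valued Lipschitz function on the circle. -/
def LipschitzReal (f : 𝕋 → ℝ) : Prop := ∃ C : ℝ≥0, LipschitzWith C f

/-- An orientation-preserving expanding map of the circle (degree `k ≥ 2`). -/
def OPExpanding (T : 𝕋 → 𝕋) : Prop :=
  Expanding T ∧ ∃ k : ℤ, 2 ≤ k ∧ HasDegree T k

/-- An orientation-preserving Lipschitz expanding map of the circle. -/
def OPLExpanding (T : 𝕋 → 𝕋) : Prop :=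
  Expanding T ∧ LipschitzCirc T ∧ ∃ k : ℤ, 2 ≤ k ∧ HasDegree T k

/-- The right-hand limit `lim_{z ↘ x} τ(z)` of `τ` at `x`. -/
def rightLim (τ : 𝕋 → 𝕋) (x : 𝕋) : 𝕋 :=
  limUnder (𝓝[>] (0:ℝ)) (fun t : ℝ => τ (x + (t : 𝕋)))

/-- The left-hand limit `lim_{z ↗ x} τ(z)` of `τ` at `x`. -/
def leftLim (τ : 𝕋 → 𝕋) (x : 𝕋) : 𝕋 :=
  limUnder (𝓝[<] (0:ℝ)) (fun t : ℝ => τ (x + (t : 𝕋)))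

/-- `τ` is a pre-image selector for `T`, with (finite) set `D` of discontinuities:
`τ x ∈ T⁻¹(x)` for all `x`, `τ` is continuous off `D`, and each point of `D` is a
jump discontinuity of `τ` (both one-sided limits exist, are distinct, and `τ x`
equals one of them). -/
def IsPreimageSelector (T τ : 𝕋 → 𝕋) (D : Finset 𝕋) : Prop :=
  (∀ x : 𝕋, T (τ x) = x) ∧
  (∀ x : 𝕋, x ∉ D → ContinuousAt τ x) ∧
  (∀ x ∈ D, ¬ ContinuousAt τ x ∧
    ∃ yl yr : 𝕋, yl ≠ yr ∧
      Tendsto (fun t : ℝ => τ (x + (t : 𝕋))) (𝓝[<] (0:ℝ)) (𝓝 yl) ∧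
      Tendsto (fun t : ℝ => τ (x + (t : 𝕋))) (𝓝[>] (0:ℝ)) (𝓝 yr) ∧
      (τ x = yl ∨ τ x = yr))

/-- `F` is a `p`-flower for `T`: the closure of the image of a pre-image selector
for `T` having exactly `p ≥ 1` discontinuities. -/
def IsPFlower (T : 𝕋 → 𝕋) (p : ℕ) (F : Set 𝕋) : Prop :=
  1 ≤ p ∧ ∃ τ : 𝕋 → 𝕋, ∃ D : Finset 𝕋,
    IsPreimageSelector T τ D ∧ D.card = p ∧ F = closure (Set.range τ)

/-- The discontinuity `x₁` of `τ` which is smallest with respect to the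
counterclockwise order based at `0`. -/
def firstDisc (D : Finset 𝕋) : 𝕋 :=
  if h : ∃ x, x ∈ D ∧ ∀ y ∈ D, arcLen 0 x ≤ arcLen 0 y then h.choose else 0

/-- The base point `y₁`: the pre-image of the first discontinuity `x₁` which is a
left endpoint of a petal (i.e. the right-hand limit of `τ` at `x₁`). -/
def basePt (τ : 𝕋 → 𝕋) (D : Finset 𝕋) : 𝕋 := rightLim τ (firstDisc D)

/-- The discontinuity `x` belongs to the set `A`, i.e. `y(x)` precedes `y'(x)` in
the counterclockwise order based at `y₁`. -/
def inA (τ : 𝕋 → 𝕋) (D : Finset 𝕋) (x : 𝕋) : Prop :=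
  arcLen (basePt τ D) (rightLim τ x) < arcLen (basePt τ D) (leftLim τ x)

open Classical in
/-- The interval `I_x` associated to a discontinuity `x` of `τ`: the arc
`[y(x), y'(x)]` if `y(x)` precedes `y'(x)` in the order based at `y₁`,
and the arc `[y'(x), y(x)]` otherwise. -/
def Iint (τ : 𝕋 → 𝕋) (D : Finset 𝕋) (x : 𝕋) : Set 𝕋 :=
  if inA τ D x then arc (rightLim τ x) (leftLim τ x) else arc (leftLim τ x) (rightLim τ x)

open Classical in
/-- The complementary interval `J_x`. -/
def Jint (τ : 𝕋 → 𝕋) (D : Finset 𝕋) (x : 𝕋) : Set 𝕋 :=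
  if inA τ D x then arc (leftLim τ x) (rightLim τ x) else arc (rightLim τ x) (leftLim τ x)

/-- The function `Σ_{n ≥ 0} χ(τⁿ(S))`; for `S = I_x` this is the function `e_x`. -/
def escapeSum (τ : 𝕋 → 𝕋) (S : Set 𝕋) (z : 𝕋) : ℝ :=
  ∑' n : ℕ, Set.indicator (τ^[n] '' S) (fun _ => (1:ℝ)) z

/-- The escape time function of a set `F`: `e_F(t) = inf {n ≥ 0 : Tⁿ(t) ∉ F}`,
written as `Σ_{n ≥ 0} χ{z : T^m z ∈ F for all m ≤ n}`. -/
def escapeTime (T : 𝕋 → 𝕋) (F : Set 𝕋) (z : 𝕋) : ℝ :=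
  ∑' n : ℕ, Set.indicator {w : 𝕋 | ∀ m ≤ n, T^[m] w ∈ F} (fun _ => (1:ℝ)) z

/-- `f : 𝕋 → ℝ` has derivative `d` at `x`. -/
def HasDerivCirc (f : 𝕋 → ℝ) (x : 𝕋) (d : ℝ) : Prop :=
  HasDerivAt (fun t : ℝ => f (x + (t : 𝕋))) d 0

/-- The (a.e. defined) derivative `f'` of a function `f : 𝕋 → ℝ`. -/
def derivCirc (f : 𝕋 → ℝ) (x : 𝕋) : ℝ :=
  deriv (fun t : ℝ => f (x + (t : 𝕋))) 0

/-- `U : 𝕋 → 𝕋` has derivative `d` at `x`. -/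
def HasDerivCircMap (U : 𝕋 → 𝕋) (x : 𝕋) (d : ℝ) : Prop :=
  HasDerivAt (fun t : ℝ => repSym (U (x + (t : 𝕋)) - U x)) d 0

/-- The (a.e. defined) derivative `U'` of a circle map `U : 𝕋 → 𝕋`. -/
def derivCircMap (U : 𝕋 → 𝕋) (x : 𝕋) : ℝ :=
  deriv (fun t : ℝ => repSym (U (x + (t : 𝕋)) - U x)) 0

/-- The Lipschitz function `φ` flattens `f` on `F`:
`f + φ - φ∘T` restricted to `F` is a constant. -/
def FlattensWith (T : 𝕋 → 𝕋) (f : 𝕋 → ℝ) (F : Set 𝕋) (φ : 𝕋 → ℝ) : Prop :=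
  ∃ c : ℝ, ∀ z ∈ F, f z + φ z - φ (T z) = c

/-- `f` can be Lipschitz flattened on `F`: there is a Lipschitz `φ : 𝕋 → ℝ` such
that the restriction of `f + φ - φ∘T` to `F` is constant. -/
def LipFlattenedOn (T : 𝕋 → 𝕋) (f : 𝕋 → ℝ) (F : Set 𝕋) : Prop :=
  ∃ φ : 𝕋 → ℝ, LipschitzReal φ ∧ FlattensWith T f F φ

/-- The topological support of a Borel measure on the circle. -/
def measSupport (μ : Measure 𝕋) : Set 𝕋 :=
  {x : 𝕋 | ∀ U : Set 𝕋, IsOpen U → x ∈ U → 0 < μ U}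

/-- The set `G` carries the measure `μ`: the topological support of `μ` is
contained in `G`. -/
def Carries (G : Set 𝕋) (μ : Measure 𝕋) : Prop := measSupport μ ⊆ G

/-- A `T`-invariant Borel probability measure. -/
def InvariantProb (T : 𝕋 → 𝕋) (μ : Measure 𝕋) : Prop :=
  IsProbabilityMeasure μ ∧ μ.map T = μ

/-- A Sturmian measure: a `T`-invariant Borel probability measure carried by some
`1`-flower. -/
def Sturmian (T : 𝕋 → 𝕋) (μ : Measure 𝕋) : Prop :=
  InvariantProb T μ ∧ ∃ F : Set 𝕋, IsPFlower T 1 F ∧ Carries F μ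

/-- The maximum ergodic average `α(f) = max_{μ ∈ M} ∫ f dμ`. -/
def maxErgAvg (T : 𝕋 → 𝕋) (f : 𝕋 → ℝ) : ℝ :=
  sSup ((fun μ : Measure 𝕋 => ∫ z, f z ∂μ) '' {μ : Measure 𝕋 | InvariantProb T μ})

/-- `μ` is an `f`-maximizing measure. -/
def IsMaximizing (T : 𝕋 → 𝕋) (f : 𝕋 → ℝ) (μ : Measure 𝕋) : Prop :=
  InvariantProb T μ ∧ ∫ z, f z ∂μ = maxErgAvg T f

/-- `μ` is supported on a periodic orbit of `T`. -/
def SupportedOnPeriodicOrbit (T : 𝕋 → 𝕋) (μ : Measure 𝕋) : Prop :=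
  ∃ x : 𝕋, ∃ n : ℕ, 0 < n ∧ T^[n] x = x ∧
    measSupport μ ⊆ Set.range (fun m : ℕ => T^[m] x)

end

/-! Since `T ∘ τ = id`, a flattening `φ` with constant `c` satisfies `φ = φ ∘ τ + f ∘ τ - c`, and
iterating, `φ = φ ∘ τᴺ + ∑_{n<N} f ∘ τⁿ⁺¹ - N c`. Off the countable set of points whose `τ`-orbit
meets a discontinuity of `τ`, the expansion of `T` makes `τᴺ` locally `K⁻ᴺ`-Lipschitz, so the
derivative of `φ ∘ τᴺ` is `O(K⁻ᴺ)` and the series `∑ (f ∘ τⁿ⁺¹)'` converges to `φ'` almost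
everywhere. Two flattening functions therefore have the same derivative a.e.; being Lipschitz, hence
absolutely continuous, they differ by a constant, and their coboundaries coincide. -/

open Function

theorem exists_mem_nhds_lipschitzOnWith_iterate {X : Type*} [PseudoEMetricSpace X]
    {τ : X → X} {κ : ℝ≥0} {x : X} (N : ℕ)
    (h : ∀ m < N, ∃ U ∈ 𝓝 (τ^[m] x), LipschitzOnWith κ τ U) :
    ∃ U ∈ 𝓝 x, LipschitzOnWith (κ ^ N) τ^[N] U := by
  induction N with
  | zero =>
    exact ⟨univ, univ_mem, by simpa using (LipschitzWith.id (α := X)).lipschitzOnWith (s := univ)⟩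
  | succ N ih =>
    obtain ⟨U, hU, hU_lip⟩ := ih fun m hm => h m (by omega)
    obtain ⟨V, hV, hV_lip⟩ := h N (Nat.lt_succ_self N)
    have hcont : ContinuousAt τ^[N] x := hU_lip.continuousOn.continuousAt hU
    refine ⟨U ∩ τ^[N] ⁻¹' V, inter_mem hU (hcont.preimage_mem_nhds hV), ?_⟩
    rw [iterate_succ', pow_succ']
    exact hV_lip.comp (hU_lip.mono inter_subset_left) fun y hy => hy.2

theorem ExpandingWith.exists_mem_nhds_lipschitzOnWith {T τ : 𝕋 → 𝕋} {K : ℝ}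
    (hT : ExpandingWith T K) (hK : 0 < K) (hτ : LeftInverse T τ) {x : 𝕋}
    (hx : ContinuousAt τ x) : ∃ U ∈ 𝓝 x, LipschitzOnWith (Real.toNNReal K⁻¹) τ U := by
  obtain ⟨ε, hε, hexp⟩ := hT
  refine ⟨τ ⁻¹' Metric.ball (τ x) (ε / 2),
    hx.preimage_mem_nhds (Metric.ball_mem_nhds _ (by positivity)), ?_⟩
  refine LipschitzOnWith.of_dist_le_mul fun y hy z hz => ?_
  have hyz : dist (τ y) (τ z) < ε :=
    calc dist (τ y) (τ z) ≤ dist (τ y) (τ x) + dist (τ z) (τ x) := dist_triangle_right _ _ _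
      _ < ε / 2 + ε / 2 := add_lt_add hy hz
      _ = ε := add_halves ε
  have := hexp _ _ hyz
  rw [hτ y, hτ z] at this
  rw [Real.coe_toNNReal _ (by positivity), inv_mul_eq_div, le_div_iff₀ hK]
  linarith

theorem lipschitzWith_coe_unitAddCircle : LipschitzWith 1 ((↑) : ℝ → 𝕋) :=
  LipschitzWith.of_dist_le_mul fun s t => by
    rw [dist_eq_norm, ← AddCircle.coe_sub, NNReal.coe_one, one_mul, Real.dist_eq]
    exact QuotientAddGroup.norm_mk_le_norm (S := AddSubgroup.zmultiples (1 : ℝ)) (m := s - t)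

theorem countable_preimage_coe_unitAddCircle {S : Set 𝕋} (hS : S.Countable) :
    (((↑) : ℝ → 𝕋) ⁻¹' S).Countable := by
  let r : 𝕋 → ℝ := fun z => AddCircle.equivIco 1 0 z
  refine (hS.biUnion fun z _ => countable_range fun n : ℤ => r z + n).mono fun t ht => ?_
  refine mem_biUnion ht ?_
  have : ((t - r t : ℝ) : 𝕋) = 0 := by rw [AddCircle.coe_sub, AddCircle.coe_equivIco, sub_self]
  obtain ⟨n, hn⟩ := (AddCircle.coe_eq_zero_iff 1).1 this
  rw [zsmul_eq_mul, mul_one] at hn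
  exact ⟨n, by simp only; linarith⟩

theorem UnitAddCircle.ae_of_ae_coe {P : 𝕋 → Prop} (h : ∀ᵐ t : ℝ, P t) : ∀ᵐ z : 𝕋, P z := by
  have hmp : MeasurePreserving (fun z : 𝕋 => (AddCircle.equivIoc 1 0 z : ℝ)) volume
      (volume.restrict (Ioc 0 (0 + 1))) :=
    (measurePreserving_subtype_coe measurableSet_Ioc).comp (AddCircle.measurePreserving_equivIoc 1)
  filter_upwards [hmp.quasiMeasurePreserving.ae (ae_restrict_of_ae h)] with z hz
  simpa using hz

theorem derivCirc_coe (g : 𝕋 → ℝ) (t : ℝ) : derivCirc g t = deriv (fun s : ℝ => g s) t := by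
  simp only [derivCirc, ← AddCircle.coe_add]
  simpa using deriv_comp_const_add (fun s : ℝ => g s) t 0

theorem ae_differentiableAt_of_forall_mem_nhds_lipschitzOnWith {E F : Type*}
    [NormedAddCommGroup E] [NormedSpace ℝ E] [FiniteDimensional ℝ E] [MeasurableSpace E]
    [BorelSpace E] {μ : Measure E} [μ.IsAddHaarMeasure]
    [NormedAddCommGroup F] [NormedSpace ℝ F] [FiniteDimensional ℝ F] {f : E → F} {s : Set E}
    (h : ∀ x ∈ s, ∃ C, ∃ U ∈ 𝓝 x, LipschitzOnWith C f U) :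
    ∀ᵐ x ∂μ, x ∈ s → DifferentiableAt ℝ f x := by
  rw [ae_iff]
  refine measure_null_of_locally_null _ fun x hx => ?_
  obtain ⟨C, U, hU, hlip⟩ := h x (Classical.not_imp.1 hx).1
  refine ⟨_, inter_mem_nhdsWithin _ (interior_mem_nhds.2 hU), measure_mono_null ?_
    (ae_iff.1 ((hlip.mono interior_subset).ae_differentiableWithinAt_of_mem (μ := μ)))⟩
  rintro y ⟨hy, hyU⟩ hd
  exact (Classical.not_imp.1 hy).2 ((hd hyU).differentiableAt (isOpen_interior.mem_nhds hyU))

theorem sum_range_comp_iterate_succ {α : Type*} {τ : α → α} {f φ : α → ℝ} {c : ℝ}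
    (h : ∀ x, f (τ x) + φ (τ x) - φ x = c) (x : α) (N : ℕ) :
    ∑ n ∈ Finset.range N, f (τ^[n + 1] x) = φ x - φ (τ^[N] x) + N * c := by
  induction N with
  | zero => simp
  | succ N ih =>
    rw [Finset.sum_range_succ, ih, iterate_succ_apply' τ N x]
    have := h (τ^[N] x)
    push_cast
    linarith

theorem hasDerivAt_tsum_of_tendsto_deriv_sub_sum {𝕜 F : Type*} [NontriviallyNormedField 𝕜]
    [NormedAddCommGroup F] [NormedSpace 𝕜 F] {u : 𝕜 → F} {a : ℕ → 𝕜 → F} {x : 𝕜}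
    (hu : DifferentiableAt 𝕜 u x) (ha : ∀ n, DifferentiableAt 𝕜 (a n) x)
    (hsum : Summable fun n => deriv (a n) x)
    (hrem : Tendsto (fun N => deriv (fun y => u y - ∑ n ∈ Finset.range N, a n y) x) atTop
      (𝓝 0)) :
    HasDerivAt u (∑' n, deriv (a n) x) x := by
  have hpartial :
      Tendsto (fun N => ∑ n ∈ Finset.range N, deriv (a n) x) atTop (𝓝 (deriv u x)) := by
    have hsub := hrem.const_sub (deriv u x)
    rw [sub_zero] at hsub
    refine hsub.congr fun N => ?_
    rw [deriv_fun_sub hu (DifferentiableAt.fun_sum fun n _ => ha n),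
      deriv_fun_sum fun n _ => ha n, sub_sub_cancel]
  rw [← tendsto_nhds_unique hpartial hsum.hasSum.tendsto_sum_nat]
  exact hu.hasDerivAt

theorem exists_mem_nhds_lipschitzOnWith_comp_iterate_coe {τ : 𝕋 → 𝕋} {κ : ℝ≥0} {g : 𝕋 → ℝ}
    {L : ℝ≥0} (hg : LipschitzWith L g) {N : ℕ} {t : ℝ}
    (ht : ∀ m < N, ∃ U ∈ 𝓝 (τ^[m] t), LipschitzOnWith κ τ U) :
    ∃ U ∈ 𝓝 t, LipschitzOnWith (L * κ ^ N) (fun s : ℝ => g (τ^[N] s)) U := by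
  obtain ⟨V, hV, hV_lip⟩ := exists_mem_nhds_lipschitzOnWith_iterate N ht
  refine ⟨(↑) ⁻¹' V, continuous_quotient_mk'.continuousAt.preimage_mem_nhds hV, ?_⟩
  simpa [comp_def] using (hg.comp_lipschitzOnWith hV_lip).comp
    lipschitzWith_coe_unitAddCircle.lipschitzOnWith (mapsTo_preimage _ V)

theorem ae_hasDerivAt_comp_coe_eq_tsum {τ : 𝕋 → 𝕋} {D : Set 𝕋} {κ : ℝ≥0} (hτ : Injective τ)
    (hD : D.Countable) (hκ : κ < 1) (hloc : ∀ x ∉ D, ∃ U ∈ 𝓝 x, LipschitzOnWith κ τ U)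
    {f φ : 𝕋 → ℝ} {Lf Lφ : ℝ≥0} (hf : LipschitzWith Lf f) (hφ : LipschitzWith Lφ φ) {c : ℝ}
    (hflat : ∀ x, f (τ x) + φ (τ x) - φ x = c) :
    ∀ᵐ t : ℝ, HasDerivAt (fun s : ℝ => φ s) (∑' n, deriv (fun s : ℝ => f (τ^[n + 1] s)) t) t := by
  have hgood : ∀ᵐ t : ℝ, ∀ m, τ^[m] t ∉ D := by
    have hB : (((↑) : ℝ → 𝕋) ⁻¹' ⋃ m, τ^[m] ⁻¹' D).Countable :=
      countable_preimage_coe_unitAddCircle (countable_iUnion fun m => hD.preimage (hτ.iterate m))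
    filter_upwards [hB.ae_notMem volume] with t ht m htm
    exact ht (mem_iUnion.2 ⟨m, htm⟩)
  have hlip : ∀ {g : 𝕋 → ℝ} {L : ℝ≥0}, LipschitzWith L g → ∀ N {t : ℝ}, (∀ m, τ^[m] t ∉ D) →
      ∃ U ∈ 𝓝 t, LipschitzOnWith (L * κ ^ N) (fun s : ℝ => g (τ^[N] s)) U :=
    fun hg N t ht => exists_mem_nhds_lipschitzOnWith_comp_iterate_coe hg fun m _ => hloc _ (ht m)
  have hdiff : ∀ n, ∀ᵐ t : ℝ, DifferentiableAt ℝ (fun s : ℝ => f (τ^[n + 1] s)) t := fun n => by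
    filter_upwards [hgood, ae_differentiableAt_of_forall_mem_nhds_lipschitzOnWith
      fun t ht => ⟨_, hlip hf (n + 1) ht⟩] with t ht hd
    exact hd ht
  filter_upwards [hgood, ae_all_iff.2 hdiff,
    (hφ.comp lipschitzWith_coe_unitAddCircle).ae_differentiableAt_real] with t ht hf_diff hφ_diff
  have hbound : ∀ {g : 𝕋 → ℝ} {L : ℝ≥0}, LipschitzWith L g → ∀ N,
      ‖deriv (fun s : ℝ => g (τ^[N] s)) t‖ ≤ L * κ ^ N := fun hg N => by
    obtain ⟨U, hU, hU_lip⟩ := hlip hg N ht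
    simpa using norm_deriv_le_of_lipschitzOn hU hU_lip
  have hκ' : (κ : ℝ) < 1 := by exact_mod_cast hκ
  refine hasDerivAt_tsum_of_tendsto_deriv_sub_sum hφ_diff hf_diff ?_ ?_
  · refine Summable.of_norm_bounded
      ((summable_geometric_of_lt_one κ.coe_nonneg hκ').mul_left ((Lf : ℝ) * κ)) fun n => ?_
    rw [mul_assoc, ← pow_succ']
    exact hbound hf (n + 1)
  · have hrem : ∀ N, (fun s : ℝ => φ s - ∑ n ∈ Finset.range N, f (τ^[n + 1] s))
        = fun s : ℝ => φ (τ^[N] s) - N * c := fun N => by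
      ext s
      rw [sum_range_comp_iterate_succ hflat]
      ring
    simp_rw [hrem, deriv_sub_const]
    exact squeeze_zero_norm (fun N => hbound hφ N) (by simpa using
      (tendsto_pow_atTop_nhds_zero_of_lt_one κ.coe_nonneg hκ').const_mul (Lφ : ℝ))

theorem exists_eq_add_const_of_ae_hasDerivAt {φ₁ φ₂ : 𝕋 → ℝ} (h₁ : LipschitzReal φ₁)
    (h₂ : LipschitzReal φ₂) {d : ℝ → ℝ}
    (hd₁ : ∀ᵐ t : ℝ, HasDerivAt (fun s : ℝ => φ₁ s) (d t) t)
    (hd₂ : ∀ᵐ t : ℝ, HasDerivAt (fun s : ℝ => φ₂ s) (d t) t) : ∃ c, ∀ z, φ₁ z = φ₂ z + c := by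
  obtain ⟨L₁, hL₁⟩ := h₁
  obtain ⟨L₂, hL₂⟩ := h₂
  have hlip :=
    (hL₁.comp lipschitzWith_coe_unitAddCircle).sub (hL₂.comp lipschitzWith_coe_unitAddCircle)
  have hd : ∀ᵐ t : ℝ, t ∈ uIcc 0 1 → HasDerivAt (fun s : ℝ => φ₁ s - φ₂ s) 0 t := by
    filter_upwards [hd₁, hd₂] with t ht₁ ht₂ _
    simpa using ht₁.fun_sub ht₂
  obtain ⟨c, hc⟩ :=
    hlip.lipschitzOnWith.absolutelyContinuousOnInterval.const_of_ae_hasDerivAt_zero hd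
  refine ⟨c, fun z => ?_⟩
  have hz := (AddCircle.equivIco 1 0 z).2
  have := hc _ (Icc_subset_uIcc ⟨hz.1, by linarith [hz.2]⟩)
  simp only [comp_apply, AddCircle.coe_equivIco] at this
  linarith

theorem FlattensWith.exists_forall_selector {T τ : 𝕋 → 𝕋} {f φ : 𝕋 → ℝ}
    (h : FlattensWith T f (closure (range τ)) φ) (hτ : LeftInverse T τ) :
    ∃ c, ∀ x, f (τ x) + φ (τ x) - φ x = c := by
  obtain ⟨c, hc⟩ := h
  exact ⟨c, fun x => by simpa [hτ x] using hc (τ x) (subset_closure (mem_range_self x))⟩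

theorem FlattensWith.ae_hasDerivAt_comp_coe {T τ : 𝕋 → 𝕋} {D : Finset 𝕋} {K : ℝ} (hK : 1 < K)
    (hT : ExpandingWith T K) (hτ : IsPreimageSelector T τ D) {f φ : 𝕋 → ℝ}
    (hf : LipschitzReal f) (hφ : LipschitzReal φ) (h : FlattensWith T f (closure (range τ)) φ) :
    ∀ᵐ t : ℝ, HasDerivAt (fun s : ℝ => φ s) (∑' n, deriv (fun s : ℝ => f (τ^[n + 1] s)) t) t := by
  obtain ⟨hTτ, hcont, -⟩ := hτ
  obtain ⟨Lf, hLf⟩ := hf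
  obtain ⟨Lφ, hLφ⟩ := hφ
  obtain ⟨c, hc⟩ := h.exists_forall_selector hTτ
  have hκ : Real.toNNReal K⁻¹ < 1 := by
    rw [← Real.toNNReal_one, Real.toNNReal_lt_toNNReal_iff one_pos]
    exact inv_lt_one_of_one_lt₀ hK
  exact ae_hasDerivAt_comp_coe_eq_tsum (LeftInverse.injective hTτ) D.countable_toSet hκ
    (fun x hx => hT.exists_mem_nhds_lipschitzOnWith (by linarith) hTτ (hcont x hx)) hLf hLφ hc

theorem unique_flattening_coboundary_general
    (T τ : 𝕋 → 𝕋) (D : Finset 𝕋)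
    (hT : OPLExpanding T) (hτ : IsPreimageSelector T τ D)
    (f : 𝕋 → ℝ) (hf : LipschitzReal f)
    (hflat : LipFlattenedOn T f (closure (Set.range τ))) :
    (∃! g : 𝕋 → ℝ,
        (∃ φ : 𝕋 → ℝ, LipschitzReal φ ∧ g = fun z => φ z - φ (T z)) ∧
        ∃ c : ℝ, ∀ z ∈ closure (Set.range τ), f z + g z = c) ∧
    (∀ φ₁ φ₂ : 𝕋 → ℝ, LipschitzReal φ₁ → LipschitzReal φ₂ →
        FlattensWith T f (closure (Set.range τ)) φ₁ →
        FlattensWith T f (closure (Set.range τ)) φ₂ →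
        ∃ c : ℝ, ∀ z : 𝕋, φ₁ z = φ₂ z + c) ∧
    (∀ φ : 𝕋 → ℝ, LipschitzReal φ → FlattensWith T f (closure (Set.range τ)) φ →
        ∀ᵐ z : 𝕋, derivCirc φ z = ∑' n : ℕ, derivCirc (f ∘ τ^[n + 1]) z) := by
  obtain ⟨⟨-, K, hK, hexp⟩, -, -⟩ := hT
  have hconst : ∀ φ₁ φ₂ : 𝕋 → ℝ, LipschitzReal φ₁ → LipschitzReal φ₂ →
      FlattensWith T f (closure (range τ)) φ₁ → FlattensWith T f (closure (range τ)) φ₂ →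
      ∃ c : ℝ, ∀ z : 𝕋, φ₁ z = φ₂ z + c := fun φ₁ φ₂ h₁ h₂ hφ₁ hφ₂ =>
    exists_eq_add_const_of_ae_hasDerivAt h₁ h₂ (hφ₁.ae_hasDerivAt_comp_coe hK hexp hτ hf h₁)
      (hφ₂.ae_hasDerivAt_comp_coe hK hexp hτ hf h₂)
  obtain ⟨φ₀, hφ₀, c₀, hc₀⟩ := hflat
  refine ⟨⟨fun z => φ₀ z - φ₀ (T z), ⟨⟨φ₀, hφ₀, rfl⟩, c₀, fun z hz => by linarith [hc₀ z hz]⟩, ?_⟩,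
    hconst, fun φ hφ hφ_flat => ?_⟩
  · rintro g ⟨⟨φ, hφ, rfl⟩, c, hc⟩
    obtain ⟨a, ha⟩ := hconst φ φ₀ hφ hφ₀ ⟨c, fun z hz => by linarith [hc z hz]⟩ ⟨c₀, hc₀⟩
    ext z
    rw [ha, ha]
    ring
  · refine UnitAddCircle.ae_of_ae_coe
      ((hφ_flat.ae_hasDerivAt_comp_coe hK hexp hτ hf hφ).mono fun t ht => ?_)
    simp only [derivCirc_coe]
    exact ht.deriv

/-- **Theorem (uniqueness of the flattening coboundary).** If the Lipschitz function `f`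
can be Lipschitz flattened on the flower `F = closure(range τ)`, then there is a unique
Lipschitz coboundary `g = φ - φ∘T` with `(f+g)|_F` constant; moreover `φ` is unique up to
an additive constant and `φ' = Σ_{n≥1} (f∘τⁿ)'` Lebesgue-a.e. -/
theorem unique_flattening_coboundary
    (T τ : 𝕋 → 𝕋) (D : Finset 𝕋)
    (hT : OPLExpanding T) (hτ : IsPreimageSelector T τ D) (hD : D.Nonempty)
    (f : 𝕋 → ℝ) (hf : LipschitzReal f)
    (hflat : LipFlattenedOn T f (closure (Set.range τ))) :
    (∃! g : 𝕋 → ℝ,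
        (∃ φ : 𝕋 → ℝ, LipschitzReal φ ∧ g = fun z => φ z - φ (T z)) ∧
        ∃ c : ℝ, ∀ z ∈ closure (Set.range τ), f z + g z = c) ∧
    (∀ φ₁ φ₂ : 𝕋 → ℝ, LipschitzReal φ₁ → LipschitzReal φ₂ →
        FlattensWith T f (closure (Set.range τ)) φ₁ →
        FlattensWith T f (closure (Set.range τ)) φ₂ →
        ∃ c : ℝ, ∀ z : 𝕋, φ₁ z = φ₂ z + c) ∧
    (∀ φ : 𝕋 → ℝ, LipschitzReal φ → FlattensWith T f (closure (Set.range τ)) φ →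
        ∀ᵐ z : 𝕋, derivCirc φ z = ∑' n : ℕ, derivCirc (f ∘ τ^[n + 1]) z) :=
  unique_flattening_coboundary_general T τ D hT hτ f hf hflat
end

section
/- Let T : 𝕋 → 𝕋 be an orientation-preserving Lipschitz expanding map, f : 𝕋 → ℝ a Lipschitz function, and (F_γ)_{γ∈𝕋} the one-parameter family of all 1-flowers of T. Then the map γ ↦ ∫ f' e_{F_γ} dLeb is continuous on 𝕋, where e_{F_γ} is the escape time function of F_γ. -/
open Filter MeasureTheory Set Topology
open scoped ENNReal NNReal

/-!
Write `e_F = ∑ₙ χ(Sₙ F)`, where `Sₙ F` is the set of points whose first `n` iterates stay in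
`F`, so that `∫ f' e_{F_γ} = ∑ₙ ∫_{Sₙ F_γ} f'`. A lift `G` of `T` expands all distances by some
`K > 1`, and over a flower (an arc on which `T` is injective off finitely many points) it wraps
around the circle at most once. Hence `Leb (F ∩ T⁻¹ X) ≤ K⁻¹ Leb X`, so `Leb (Sₙ F) ≤ K⁻ⁿ` and
the `n`-th term is at most `Lip(f) K⁻ⁿ`, uniformly in `γ`. Each term is continuous in `γ`: the
arcs `F_γ` move continuously in measure, and `T⁻¹` multiplies measures by at most `k / K`.
The Weierstrass M-test concludes.
-/
section Survival

variable {α : Type*} (T : α → α) (F : Set α)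

def survivalSet (n : ℕ) : Set α := {w | ∀ m ≤ n, T^[m] w ∈ F}

variable {T F}

lemma survivalSet_zero : survivalSet T F 0 = F := by
  ext w
  simp [survivalSet]

lemma survivalSet_succ (n : ℕ) :
    survivalSet T F (n + 1) = F ∩ T ⁻¹' survivalSet T F n := by
  ext w
  simp only [survivalSet, mem_inter_iff, mem_preimage]
  constructor
  · intro hw
    exact ⟨hw 0 (Nat.zero_le _), fun m hm => by simpa using hw (m + 1) (by omega)⟩
  · rintro ⟨h0, hrec⟩ (_ | m) hm
    · exact h0
    · simpa using hrec m (by omega)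

lemma survivalSet_sdiff_subset (F' : Set α) (n : ℕ) :
    survivalSet T F n \ survivalSet T F' n ⊆ ⋃ m ∈ Finset.range (n + 1), T^[m] ⁻¹' (F \ F') := by
  rintro w ⟨hw, hw'⟩
  obtain ⟨m, hm, hmF'⟩ : ∃ m ≤ n, T^[m] w ∉ F' := by simpa [survivalSet] using hw'
  exact mem_biUnion (Finset.mem_range.mpr (by omega)) ⟨hw m hm, hmF'⟩

variable [MeasurableSpace α] {μ : Measure α}

lemma MeasurableSet.survivalSet (hT : Measurable T) (hF : MeasurableSet F) (n : ℕ) :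
    MeasurableSet (survivalSet T F n) := by
  induction n with
  | zero => rwa [survivalSet_zero]
  | succ n ih => rw [survivalSet_succ]; exact hF.inter (hT ih)

lemma measure_survivalSet_le {r : ℝ≥0∞}
    (h : ∀ s, MeasurableSet s → μ (F ∩ T ⁻¹' s) ≤ r * μ s) (hT : Measurable T)
    (hF : MeasurableSet F) (n : ℕ) :
    μ (survivalSet T F n) ≤ r ^ n * μ F := by
  induction n with
  | zero => simp [survivalSet_zero]
  | succ n ih =>
    calc μ (survivalSet T F (n + 1))
        ≤ r * μ (survivalSet T F n) := by
          rw [survivalSet_succ]; exact h _ (hF.survivalSet hT n)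
      _ ≤ r * (r ^ n * μ F) := by gcongr
      _ = r ^ (n + 1) * μ F := by ring

lemma measure_preimage_iterate_le {c : ℝ≥0∞}
    (h : ∀ s, MeasurableSet s → μ (T ⁻¹' s) ≤ c * μ s) (hT : Measurable T) (m : ℕ)
    {s : Set α} (hs : MeasurableSet s) :
    μ (T^[m] ⁻¹' s) ≤ c ^ m * μ s := by
  induction m generalizing s with
  | zero => simp
  | succ m ih =>
    calc μ (T^[m + 1] ⁻¹' s) = μ (T^[m] ⁻¹' (T ⁻¹' s)) := by
          rw [Function.iterate_succ', preimage_comp]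
      _ ≤ c ^ m * μ (T ⁻¹' s) := ih (hT hs)
      _ ≤ c ^ m * (c * μ s) := by gcongr; exact h s hs
      _ = c ^ (m + 1) * μ s := by ring

lemma measure_survivalSet_sdiff_le {c : ℝ≥0∞}
    (h : ∀ s, MeasurableSet s → μ (T ⁻¹' s) ≤ c * μ s) (hT : Measurable T)
    {F' : Set α} (hF : MeasurableSet F) (hF' : MeasurableSet F') (n : ℕ) :
    μ (survivalSet T F n \ survivalSet T F' n) ≤
      (∑ m ∈ Finset.range (n + 1), c ^ m) * μ (F \ F') := by
  calc μ (survivalSet T F n \ survivalSet T F' n)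
      ≤ ∑ m ∈ Finset.range (n + 1), μ (T^[m] ⁻¹' (F \ F')) :=
        (measure_mono (survivalSet_sdiff_subset F' n)).trans (measure_biUnion_finset_le _ _)
    _ ≤ ∑ m ∈ Finset.range (n + 1), c ^ m * μ (F \ F') :=
        Finset.sum_le_sum fun m _ => measure_preimage_iterate_le h hT m (hF.diff hF')
    _ = _ := (Finset.sum_mul ..).symm

lemma tendsto_measure_survivalSet_sdiff {ι : Type*} {l : Filter ι} {c : ℝ≥0∞} (hc : c ≠ ∞)
    (h : ∀ s, MeasurableSet s → μ (T ⁻¹' s) ≤ c * μ s) (hT : Measurable T)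
    {F F' : ι → Set α} (hF : ∀ i, MeasurableSet (F i)) (hF' : ∀ i, MeasurableSet (F' i))
    (hlim : Tendsto (fun i => μ (F i \ F' i)) l (𝓝 0)) (n : ℕ) :
    Tendsto (fun i => μ (survivalSet T (F i) n \ survivalSet T (F' i) n)) l (𝓝 0) := by
  have hM : (∑ m ∈ Finset.range (n + 1), c ^ m) ≠ ∞ :=
    ENNReal.sum_ne_top.2 fun m _ => ENNReal.pow_ne_top hc
  refine tendsto_of_tendsto_of_tendsto_of_le_of_le tendsto_const_nhds
    (by simpa using ENNReal.Tendsto.const_mul hlim (.inr hM)) (fun _ => zero_le)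
    fun i => measure_survivalSet_sdiff_le h hT (hF i) (hF' i) n

end Survival

section BoundedIntegrand

variable {α : Type*} [MeasurableSpace α] {μ : Measure α} {g : α → ℝ} {C : ℝ}

lemma abs_setIntegral_sub_setIntegral_le [IsFiniteMeasure μ] (hg : AEStronglyMeasurable g μ)
    (hC : ∀ x, |g x| ≤ C) {A B : Set α} (hA : MeasurableSet A) (hB : MeasurableSet B) :
    |∫ x in A, g x ∂μ - ∫ x in B, g x ∂μ| ≤ C * (μ.real (A \ B) + μ.real (B \ A)) := by
  have hint : ∀ s, IntegrableOn g s μ := fun s =>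
    (Integrable.of_bound hg C (Eventually.of_forall hC)).integrableOn
  have hnorm : ∀ s, ‖∫ x in s, g x ∂μ‖ ≤ C * μ.real s := fun s =>
    norm_setIntegral_le_of_norm_le_const (measure_lt_top μ s) fun x _ => hC x
  rw [← integral_inter_add_sdiff hB (hint A), ← integral_inter_add_sdiff hA (hint B),
    inter_comm, add_sub_add_left_eq_sub, mul_add]
  exact (abs_sub _ _).trans (add_le_add (hnorm _) (hnorm _))

lemma integral_mul_tsum_indicator (hg : AEStronglyMeasurable g μ) (hC : ∀ x, |g x| ≤ C)
    {A : ℕ → Set α} (hA : ∀ n, MeasurableSet (A n)) (hsum : ∑' n, μ (A n) ≠ ∞) :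
    ∫ x, g x * ∑' n, (A n).indicator (fun _ => (1 : ℝ)) x ∂μ = ∑' n, ∫ x in A n, g x ∂μ := by
  have hterm : ∀ n x, g x * (A n).indicator (fun _ => (1 : ℝ)) x = (A n).indicator g x :=
    fun n x => by by_cases hx : x ∈ A n <;> simp [hx]
  simp_rw [← tsum_mul_left, hterm, ← integral_indicator (hA _)]
  refine integral_tsum (fun n => hg.indicator (hA n)) (ne_top_of_le_ne_top
    (ENNReal.mul_ne_top (ENNReal.ofReal_ne_top (r := C)) hsum) ?_)
  rw [← ENNReal.tsum_mul_left]
  refine ENNReal.tsum_le_tsum fun n => ?_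
  calc ∫⁻ x, ‖(A n).indicator g x‖ₑ ∂μ = ∫⁻ x in A n, ‖g x‖ₑ ∂μ := by
        rw [← lintegral_indicator (hA n)]
        simp_rw [enorm_indicator_eq_indicator_enorm]
    _ ≤ ∫⁻ _ in A n, ENNReal.ofReal C ∂μ :=
        lintegral_mono fun x => by rw [← ofReal_norm]; exact ENNReal.ofReal_le_ofReal (hC x)
    _ = ENNReal.ofReal C * μ (A n) := by rw [setLIntegral_const]

lemma continuousAt_setIntegral_of_tendsto_measure_sdiff [IsFiniteMeasure μ]
    {X : Type*} [TopologicalSpace X]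
    (hg : AEStronglyMeasurable g μ) (hC : ∀ x, |g x| ≤ C) {A : X → Set α}
    (hA : ∀ x, MeasurableSet (A x)) {x₀ : X}
    (h₁ : Tendsto (fun x => μ (A x \ A x₀)) (𝓝 x₀) (𝓝 0))
    (h₂ : Tendsto (fun x => μ (A x₀ \ A x)) (𝓝 x₀) (𝓝 0)) :
    ContinuousAt (fun x => ∫ y in A x, g y ∂μ) x₀ := by
  have hreal : ∀ {u : X → ℝ≥0∞}, Tendsto u (𝓝 x₀) (𝓝 0) →
      Tendsto (fun x => (u x).toReal) (𝓝 x₀) (𝓝 0) := fun hu => (ENNReal.tendsto_toReal ENNReal.zero_ne_top).comp hu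
  rw [ContinuousAt, tendsto_iff_dist_tendsto_zero]
  refine squeeze_zero (fun _ => dist_nonneg) (fun x =>
    (abs_setIntegral_sub_setIntegral_le hg hC (hA x) (hA x₀)).trans_eq' (Real.dist_eq _ _)) ?_
  simpa [Measure.real] using ((hreal h₁).add (hreal h₂)).const_mul C

end BoundedIntegrand

namespace UnitAddCircle

lemma coe_rep01 (z : 𝕋) : ((rep01 z : ℝ) : 𝕋) = z :=
  (AddCircle.equivIco 1 0).symm_apply_apply z

lemma rep01_mem_Ico (z : 𝕋) : rep01 z ∈ Ico (0 : ℝ) 1 := by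
  have h : rep01 z ∈ Ico (0 : ℝ) (0 + 1) := ((AddCircle.equivIco 1 0) z).2
  rwa [zero_add] at h

lemma coe_repSym (z : 𝕋) : ((repSym z : ℝ) : 𝕋) = z :=
  (AddCircle.equivIco 1 (-(1 / 2))).symm_apply_apply z

lemma abs_repSym (z : 𝕋) : |repSym z| = ‖z‖ := by
  have hmem : repSym z ∈ Ico (-(1 / 2) : ℝ) (-(1 / 2) + 1) := ((AddCircle.equivIco 1 _) z).2
  conv_rhs => rw [← coe_repSym z]
  refine ((AddCircle.norm_coe_eq_abs_iff (p := 1) one_ne_zero).2 ?_).symm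
  rw [abs_le]
  constructor <;> linarith [hmem.1, hmem.2]

lemma dist_coe_le (x y : ℝ) : dist (x : 𝕋) (y : 𝕋) ≤ |x - y| := by
  rw [dist_eq_norm, ← AddCircle.coe_sub]
  exact QuotientAddGroup.norm_mk_le_norm

lemma dist_coe_eq {x y : ℝ} (h : |x - y| ≤ 1 / 2) : dist (x : 𝕋) (y : 𝕋) = |x - y| := by
  rw [dist_eq_norm, ← AddCircle.coe_sub]
  exact (AddCircle.norm_coe_eq_abs_iff (p := 1) one_ne_zero).2 (by simpa using h)

lemma eq_of_coe_eq {x y : ℝ} (h : (x : 𝕋) = y) (hxy : |x - y| < 1) : x = y := by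
  rw [← sub_eq_zero, ← AddCircle.coe_sub] at h
  obtain ⟨n, hn⟩ := (AddCircle.coe_eq_zero_iff 1).1 h
  rw [zsmul_eq_mul, mul_one] at hn
  have hn0 : n = 0 := by
    rw [← hn, abs_lt] at hxy
    have : -1 < n ∧ n < 1 := ⟨by exact_mod_cast hxy.1, by exact_mod_cast hxy.2⟩
    omega
  rw [hn0, Int.cast_zero, eq_comm, sub_eq_zero] at hn
  exact hn

lemma countable_preimage_coe {D : Set 𝕋} (hD : D.Countable) :
    ((↑) ⁻¹' D : Set ℝ).Countable := by
  have : Countable D := hD.to_subtype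
  refine Set.Countable.mono (fun t ht => ?_) (countable_range fun p : D × ℤ => rep01 p.1 + p.2)
  exact ⟨(⟨t, ht⟩, ⌊t⌋), by simp [rep01, Int.fract_add_floor]⟩

lemma volume_preimage_coe_inter_Ioc_le {X : Set 𝕋} (hX : MeasurableSet X) (c : ℝ) (n : ℕ) :
    volume ((↑) ⁻¹' X ∩ Ioc c (c + n)) ≤ n * volume X := by
  induction n with
  | zero => simp
  | succ n ih =>
    have hsplit : Ioc c (c + (n + 1 : ℕ)) = Ioc c (c + n) ∪ Ioc (c + n) (c + n + 1) := by
      push_cast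
      rw [← add_assoc, Ioc_union_Ioc_eq_Ioc (by linarith [n.cast_nonneg (α := ℝ)]) (by linarith)]
    rw [hsplit, inter_union_distrib_left]
    calc _ ≤ volume ((↑) ⁻¹' X ∩ Ioc c (c + n)) + volume ((↑) ⁻¹' X ∩ Ioc (c + n) (c + n + 1)) :=
          measure_union_le _ _
      _ ≤ n * volume X + volume X := by
          rw [← AddCircle.add_projection_respects_measure 1 _ hX]; gcongr
      _ = (n + 1 : ℕ) * volume X := by push_cast; ring

end UnitAddCircle

open UnitAddCircle

section Arc

variable (a b : 𝕋)

lemma arcLen_nonneg : 0 ≤ arcLen a b := (rep01_mem_Ico _).1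

lemma arcLen_lt_one : arcLen a b < 1 := (rep01_mem_Ico _).2

lemma arcLen_self : arcLen a a = 0 := by
  have h := rep01_mem_Ico 0
  rw [arcLen, sub_self]
  exact eq_of_coe_eq (y := 0) (by rw [coe_rep01]; rfl)
    (by rw [sub_zero, abs_of_nonneg h.1]; exact h.2)

lemma isCompact_arc : IsCompact (arc a b) :=
  isCompact_Icc.image (continuous_const.add (AddCircle.continuous_mk' 1))

lemma measurableSet_arc : MeasurableSet (arc a b) :=
  (isCompact_arc a b).isClosed.measurableSet

variable {a b}

lemma arc_eq_image_Icc {x : ℝ} (hx : (x : 𝕋) = a) :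
    arc a b = (↑) '' Icc x (x + arcLen a b) := by
  have hIcc : Icc x (x + arcLen a b) = (x + ·) '' Icc 0 (arcLen a b) := by
    rw [image_const_add_Icc, add_zero]
  rw [arc, hIcc, image_image]
  simp_rw [AddCircle.coe_add, hx]

lemma preimage_arc_inter_Ioc {x : ℝ} (hx : (x : 𝕋) = a) :
    (↑) ⁻¹' arc a b ∩ Ioc (x + arcLen a b - 1) (x + arcLen a b) = Icc x (x + arcLen a b) := by
  have h0 := arcLen_nonneg a b
  have h1 := arcLen_lt_one a b
  rw [arc_eq_image_Icc hx]
  ext t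
  constructor
  · rintro ⟨⟨u, hu, hut⟩, ht⟩
    have : u = t := eq_of_coe_eq hut (abs_lt.2 ⟨by linarith [hu.1, ht.2], by linarith [hu.2, ht.1]⟩)
    exact this ▸ hu
  · intro ht
    exact ⟨mem_image_of_mem _ ht, by linarith [ht.1], ht.2⟩

lemma continuousAt_arcLen {X : Type*} [TopologicalSpace X] {a b : X → 𝕋} {x₀ : X}
    (ha : ContinuousAt a x₀) (hb : ContinuousAt b x₀) (hne : a x₀ ≠ b x₀) :
    ContinuousAt (fun x => arcLen (a x) (b x)) x₀ := by
  have hrep : ContinuousAt rep01 (b x₀ - a x₀) :=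
    continuous_subtype_val.continuousAt.comp
      (AddCircle.continuousAt_equivIco 1 0 (by simpa [sub_eq_zero] using hne.symm))
  exact hrep.comp (f := fun x => b x - a x) (hb.sub ha)

lemma Icc_sdiff_Icc_subset (x y x' y' : ℝ) :
    Icc x y \ Icc x' y' ⊆ Ico x x' ∪ Ioc y' y := by
  rintro t ⟨⟨hxt, hty⟩, hnot⟩
  by_cases h : t < x'
  · exact Or.inl ⟨hxt, h⟩
  · exact Or.inr ⟨lt_of_not_ge fun h' => hnot ⟨le_of_not_gt h, h'⟩, hty⟩

lemma volume_arc_sdiff_arc_le (a b a' b' : 𝕋) :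
    volume (arc a b \ arc a' b') ≤
      ENNReal.ofReal (2 * dist a a' + |arcLen a b - arcLen a' b'|) := by
  set x := rep01 a
  set δ := repSym (a - a')
  set ℓ := arcLen a b
  set ℓ' := arcLen a' b'
  have hx : (x : 𝕋) = a := coe_rep01 a
  have hx' : ((x - δ : ℝ) : 𝕋) = a' := by
    rw [AddCircle.coe_sub, hx, coe_repSym, sub_sub_cancel]
  have hδ : |δ| = dist a a' := by rw [abs_repSym, dist_eq_norm]
  rw [AddCircle.add_projection_respects_measure 1 (x + ℓ - 1)
    ((measurableSet_arc _ _).diff (measurableSet_arc _ _)), preimage_sdiff,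
    ← inter_sdiff_right_comm, sub_add_cancel, preimage_arc_inter_Ioc hx]
  calc volume (Icc x (x + ℓ) \ (↑) ⁻¹' arc a' b')
      ≤ volume (Icc x (x + ℓ) \ Icc (x - δ) (x - δ + ℓ')) := by
        gcongr
        rw [arc_eq_image_Icc hx']
        exact subset_preimage_image _ _
    _ ≤ volume (Ico x (x - δ)) + volume (Ioc (x - δ + ℓ') (x + ℓ)) :=
        (measure_mono (Icc_sdiff_Icc_subset _ _ _ _)).trans (measure_union_le _ _)
    _ = ENNReal.ofReal (-δ) + ENNReal.ofReal (δ + (ℓ - ℓ')) := by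
        rw [Real.volume_Ico, Real.volume_Ioc]; ring_nf
    _ ≤ ENNReal.ofReal (|δ|) + ENNReal.ofReal (|δ| + |ℓ - ℓ'|) := by
        gcongr
        exacts [neg_le_abs δ, le_abs_self δ, le_abs_self _]
    _ = ENNReal.ofReal (2 * dist a a' + |ℓ - ℓ'|) := by
        rw [← ENNReal.ofReal_add (abs_nonneg _) (by positivity), hδ]; ring_nf

lemma tendsto_volume_arc_sdiff_arc {ι : Type*} {l : Filter ι} {a b a' b' : ι → 𝕋}
    (ha : Tendsto (fun i => dist (a i) (a' i)) l (𝓝 0))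
    (hℓ : Tendsto (fun i => arcLen (a i) (b i) - arcLen (a' i) (b' i)) l (𝓝 0)) :
    Tendsto (fun i => volume (arc (a i) (b i) \ arc (a' i) (b' i))) l (𝓝 0) := by
  have hbound : Tendsto (fun i => ENNReal.ofReal
      (2 * dist (a i) (a' i) + |arcLen (a i) (b i) - arcLen (a' i) (b' i)|)) l (𝓝 0) := by
    simpa using ENNReal.tendsto_ofReal ((ha.const_mul 2).add hℓ.abs)
  exact tendsto_of_tendsto_of_tendsto_of_le_of_le tendsto_const_nhds hbound (fun _ => zero_le)
    fun i => volume_arc_sdiff_arc_le _ _ _ _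

end Arc

structure IsExpandingLift (T : 𝕋 → 𝕋) (G : ℝ → ℝ) (K : ℝ) (k : ℕ) : Prop where
  lift : ∀ t : ℝ, T t = G t
  continuous : Continuous G
  add_one : ∀ t, G (t + 1) = G t + k
  one_lt : 1 < K
  expand : ∀ u v, u ≤ v → K * (v - u) ≤ G v - G u

namespace IsExpandingLift

variable {T : 𝕋 → 𝕋} {G : ℝ → ℝ} {K : ℝ} {k : ℕ} (hG : IsExpandingLift T G K k)
include hG

lemma continuous_circleMap : Continuous T := by
  refine (QuotientAddGroup.isQuotientMap_mk _).continuous_iff.2 ?_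
  have : T ∘ (↑) = ((↑) : ℝ → 𝕋) ∘ G := funext hG.lift
  exact this ▸ (AddCircle.continuous_mk' 1).comp hG.continuous

lemma pos : 0 < K := zero_lt_one.trans hG.one_lt

lemma strictMono : StrictMono G := fun u v huv => by
  nlinarith [hG.expand u v huv.le, hG.pos]

lemma preimage_coe_preimage (X : Set 𝕋) :
    ((↑) : ℝ → 𝕋) ⁻¹' (T ⁻¹' X) = G ⁻¹' ((↑) ⁻¹' X) := by
  ext t
  simp [hG.lift t]

lemma volume_le_image (s : Set ℝ) : volume s ≤ ENNReal.ofReal K⁻¹ * volume (G '' s) := by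
  have hanti : AntilipschitzWith (Real.toNNReal K⁻¹) G := by
    refine AntilipschitzWith.of_le_mul_dist fun u v => ?_
    rw [Real.coe_toNNReal _ (inv_nonneg.2 hG.pos.le), Real.dist_eq, Real.dist_eq,
      le_inv_mul_iff₀ hG.pos]
    rcases le_total u v with huv | hvu
    · rw [abs_sub_comm, abs_of_nonneg (sub_nonneg.2 huv), abs_sub_comm,
        abs_of_nonneg (sub_nonneg.2 (hG.strictMono.monotone huv))]
      exact hG.expand u v huv
    · rw [abs_of_nonneg (sub_nonneg.2 hvu),
        abs_of_nonneg (sub_nonneg.2 (hG.strictMono.monotone hvu))]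
      exact hG.expand v u hvu
  simpa [hausdorffMeasure_real, ENNReal.ofReal] using hanti.le_hausdorffMeasure_image zero_le_one s

lemma volume_Icc_inter_preimage_le {u v : ℝ} (S : Set ℝ) :
    volume (Icc u v ∩ G ⁻¹' S) ≤ ENNReal.ofReal K⁻¹ * volume (S ∩ Ioc (G u) (G v)) := by
  refine (hG.volume_le_image _).trans ?_
  rw [measure_congr ((ae_eq_refl S).inter Ioc_ae_eq_Icc)]
  gcongr
  rintro _ ⟨t, ⟨⟨hut, htv⟩, htS⟩, rfl⟩
  exact ⟨htS, hG.strictMono.monotone hut, hG.strictMono.monotone htv⟩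

lemma volume_preimage_le {X : Set 𝕋} (hX : MeasurableSet X) :
    volume (T ⁻¹' X) ≤ k * ENNReal.ofReal K⁻¹ * volume X := by
  calc volume (T ⁻¹' X)
      = volume (G ⁻¹' ((↑) ⁻¹' X) ∩ Ioc 0 (0 + 1)) := by
        rw [AddCircle.add_projection_respects_measure 1 0
          (hX.preimage hG.continuous_circleMap.measurable), hG.preimage_coe_preimage]
    _ ≤ volume (Icc 0 1 ∩ G ⁻¹' ((↑) ⁻¹' X)) := by
        rw [inter_comm, zero_add]
        exact measure_mono (inter_subset_inter_left _ Ioc_subset_Icc_self)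
    _ ≤ ENNReal.ofReal K⁻¹ * volume ((↑) ⁻¹' X ∩ Ioc (G 0) (G 0 + k)) := by
        simpa [← hG.add_one 0] using hG.volume_Icc_inter_preimage_le (u := 0) (v := 1) _
    _ ≤ ENNReal.ofReal K⁻¹ * (k * volume X) := by
        gcongr; exact volume_preimage_coe_inter_Ioc_le hX _ k
    _ = k * ENNReal.ofReal K⁻¹ * volume X := by ring

end IsExpandingLift

lemma Continuous.forall_pos_or_forall_neg {X : Type*} [TopologicalSpace X] [PreconnectedSpace X]
    {φ : X → ℝ} (hφ : Continuous φ) (h : ∀ x, φ x ≠ 0) : (∀ x, 0 < φ x) ∨ ∀ x, φ x < 0 := by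
  by_contra hcon
  push Not at hcon
  obtain ⟨⟨x, hx⟩, ⟨y, hy⟩⟩ := hcon
  obtain ⟨z, hz⟩ := intermediate_value_univ x y hφ ⟨hx, hy⟩
  exact h z hz

lemma tendsto_atTop_of_add_one {G : ℝ → ℝ} (hG : Continuous G) {c : ℝ} (hc : 0 < c)
    (h : ∀ t, G (t + 1) = G t + c) : Tendsto G atTop atTop := by
  have hper : Function.Periodic (fun t => G t - c * t) 1 := fun t => by
    simp only [h t]; ring
  obtain ⟨B, hB⟩ := (isBounded_iff_bddBelow_bddAbove.1
    (hper.isBounded_of_continuous one_ne_zero (by fun_prop))).1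
  refine tendsto_atTop_mono (fun t => ?_) (tendsto_atTop_add_const_left _ B
    (tendsto_id.const_mul_atTop hc))
  have := hB (mem_range_self t)
  simp only [id] at this ⊢
  linarith

lemma ExpandingWith.exists_le_abs_lift_sub {T : 𝕋 → 𝕋} {K : ℝ} (hexp : ExpandingWith T K)
    {G : ℝ → ℝ} (hlift : ∀ t : ℝ, T t = G t) :
    ∃ δ > 0, ∀ u v : ℝ, |v - u| ≤ δ → K * |v - u| ≤ |G v - G u| := by
  obtain ⟨ε, hε, hexp⟩ := hexp
  refine ⟨min (ε / 2) (1 / 2), by positivity, fun u v huv => ?_⟩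
  have hhalf : |v - u| ≤ 1 / 2 := huv.trans (min_le_right _ _)
  have hε' : |v - u| < ε := huv.trans_lt ((min_le_left _ _).trans_lt (half_lt_self hε))
  calc K * |v - u| = K * dist (v : 𝕋) (u : 𝕋) := by rw [dist_coe_eq hhalf]
    _ ≤ dist (T v) (T u) := hexp _ _ (by rwa [dist_coe_eq hhalf])
    _ ≤ |G v - G u| := by rw [hlift, hlift]; exact dist_coe_le _ _

lemma mul_sub_le_sub_of_local {G : ℝ → ℝ} {K δ : ℝ} (hδ : 0 < δ)
    (hloc : ∀ u v, u ≤ v → v ≤ u + δ → K * (v - u) ≤ G v - G u) {u v : ℝ} (huv : u ≤ v) :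
    K * (v - u) ≤ G v - G u := by
  suffices ∀ n : ℕ, ∀ u v, u ≤ v → v ≤ u + n * δ → K * (v - u) ≤ G v - G u by
    obtain ⟨n, hn⟩ := exists_nat_gt ((v - u) / δ)
    exact this n u v huv (by rw [div_lt_iff₀ hδ] at hn; linarith)
  intro n
  induction n with
  | zero => intro u v h1 h2; rw [le_antisymm (by simpa using h2) h1]; simp
  | succ n ih =>
    intro u v h1 h2
    rcases le_or_gt v (u + δ) with h | h
    · exact hloc u v h1 h
    · have e1 := hloc u (u + δ) (by linarith) le_rfl
      have e2 := ih (u + δ) v h.le (by push_cast at h2; linarith)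
      linarith

theorem Expanding.exists_isExpandingLift {T : 𝕋 → 𝕋} (hT : Expanding T) {k : ℕ} (hk : 0 < k)
    (hdeg : HasDegree T k) : ∃ G K, IsExpandingLift T G K k := by
  obtain ⟨-, K, hK, hexp⟩ := hT
  obtain ⟨G, ⟨hGc, hlift⟩, hper⟩ := hdeg
  simp only [Int.cast_natCast] at hper
  obtain ⟨δ, hδ, hloc⟩ := hexp.exists_le_abs_lift_sub hlift
  have hKpos : 0 < K := zero_lt_one.trans hK
  have htop : Tendsto G atTop atTop := tendsto_atTop_of_add_one hGc (by exact_mod_cast hk) hper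
  -- Locally `G` cannot change direction, and it cannot decrease since it tends to `+∞`.
  have hinc : ∀ s, 0 < s → s ≤ δ → ∀ t, 0 < G (t + s) - G t := by
    intro s hs hsδ
    have hne : ∀ t, G (t + s) - G t ≠ 0 := fun t h0 => by
      have := hloc t (t + s) (by rwa [add_sub_cancel_left, abs_of_pos hs])
      rw [h0, abs_zero, add_sub_cancel_left, abs_of_pos hs] at this
      nlinarith
    refine ((by fun_prop : Continuous fun t => G (t + s) - G t).forall_pos_or_forall_neg
      hne).resolve_right fun hneg => ?_
    have hle : ∀ n : ℕ, G (n * s) ≤ G 0 := fun n => by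
      induction n with
      | zero => simp
      | succ n ih => have := hneg (n * s); push_cast; rw [add_mul, one_mul]; linarith
    obtain ⟨n, hn⟩ := ((htop.comp (tendsto_natCast_atTop_atTop.atTop_mul_const hs)
      ).eventually_gt_atTop (G 0)).exists
    exact (hle n).not_gt hn
  refine ⟨G, K, hlift, hGc, hper, hK, fun u v huv => mul_sub_le_sub_of_local hδ ?_ huv⟩
  intro u v huv hvδ
  rcases huv.eq_or_lt with rfl | hlt
  · simp
  · have h1 := hloc u v (by rw [abs_of_pos (sub_pos.2 hlt)]; linarith)
    have h2 := hinc (v - u) (sub_pos.2 hlt) (by linarith) u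
    rw [add_sub_cancel] at h2
    rwa [abs_of_pos (sub_pos.2 hlt), abs_of_pos h2] at h1

namespace IsPreimageSelector

variable {T τ : 𝕋 → 𝕋} {D : Finset 𝕋} (hsel : IsPreimageSelector T τ D)
include hsel

lemma eq_apply_of_mem_closure_range (hT : Continuous T) {w z : 𝕋} (hw : w ∉ D)
    (hz : z ∈ closure (range τ)) (hTz : T z = w) : z = τ w := by
  obtain ⟨u, hu, hlim⟩ := mem_closure_iff_seq_limit.1 hz
  choose v hv using hu
  have hvw : Tendsto v atTop (𝓝 w) := by
    have := (hT.tendsto z).comp hlim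
    rw [hTz] at this
    exact this.congr fun n => by simp [← hv n, hsel.1]
  exact tendsto_nhds_unique hlim <|
    ((hsel.2.1 w hw).tendsto.comp hvw).congr fun n => hv n

lemma arcLen_pos {a b : 𝕋} (hF : arc a b = closure (range τ)) : 0 < arcLen a b := by
  refine (arcLen_nonneg a b).lt_of_ne fun h0 => ?_
  have harc : arc a b = {a} := by
    rw [arc_eq_image_Icc (coe_rep01 a), ← h0, add_zero, Icc_self, image_singleton, coe_rep01]
  have hτ : ∀ x, τ x = a := fun x =>
    (harc ▸ hF ▸ subset_closure (mem_range_self x) : τ x ∈ ({a} : Set 𝕋))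
  have hconst : ∀ x, x = T a := fun x => by rw [← hsel.1 x, hτ]
  have hhalf : ‖(((1 : ℝ) / 2 : ℝ) : 𝕋)‖ = 1 / 2 := by
    simpa using AddCircle.norm_half_period_eq (p := (1 : ℝ))
  rw [hconst (((1 : ℝ) / 2 : ℝ) : 𝕋), ← hconst 0, norm_zero] at hhalf
  norm_num at hhalf

end IsPreimageSelector

lemma IsPFlower.ne {T : 𝕋 → 𝕋} {p : ℕ} {a b : 𝕋} (hF : IsPFlower T p (arc a b)) : a ≠ b := by
  obtain ⟨-, τ, D, hsel, -, hFτ⟩ := hF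
  rintro rfl
  simpa [arcLen_self] using hsel.arcLen_pos hFτ

namespace IsExpandingLift

variable {T : 𝕋 → 𝕋} {G : ℝ → ℝ} {K : ℝ} {k : ℕ} (hG : IsExpandingLift T G K k)
include hG

lemma le_add_one_of_arc_eq_closure_range {τ : 𝕋 → 𝕋} {D : Finset 𝕋}
    (hsel : IsPreimageSelector T τ D) {a b : 𝕋} (hF : arc a b = closure (range τ)) {x : ℝ}
    (hx : (x : 𝕋) = a) : G (x + arcLen a b) ≤ G x + 1 := by
  set ℓ := arcLen a b
  by_contra! hcon
  -- Otherwise some `s ∉ D` has two preimages in the flower, the points above `G⁻¹ s` and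
  -- `G⁻¹ (s + 1)`; but off `D` the flower contains only the preimage `τ s`.
  obtain ⟨s, hsD, hs⟩ := ((countable_preimage_coe D.countable_toSet).dense_compl ℝ).exists_between
    (show G x < G (x + ℓ) - 1 by linarith)
  have hcont : ContinuousOn G (Icc x (x + ℓ)) := hG.continuous.continuousOn
  have hxℓ : x ≤ x + ℓ := by linarith [arcLen_nonneg a b]
  obtain ⟨t₁, ht₁, hGt₁⟩ := intermediate_value_Ioo hxℓ hcont ⟨hs.1, by linarith [hs.2]⟩
  obtain ⟨t₂, ht₂, hGt₂⟩ := intermediate_value_Ioo hxℓ hcont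
    (show s + 1 ∈ Ioo (G x) (G (x + ℓ)) from ⟨by linarith [hs.1], by linarith [hs.2]⟩)
  have hτ : ∀ t ∈ Ioo x (x + ℓ), G t = s ∨ G t = s + 1 → (t : 𝕋) = τ s := by
    intro t ht hGt
    refine hsel.eq_apply_of_mem_closure_range hG.continuous_circleMap hsD ?_ ?_
    · rw [← hF, arc_eq_image_Icc hx]; exact mem_image_of_mem _ (Ioo_subset_Icc_self ht)
    · rcases hGt with h | h <;> simp [hG.lift, h]
  have ht : t₁ = t₂ := eq_of_coe_eq ((hτ t₁ ht₁ (.inl hGt₁)).trans (hτ t₂ ht₂ (.inr hGt₂)).symm)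
    (abs_lt.2 ⟨by linarith [ht₁.1, ht₂.2, arcLen_lt_one a b],
      by linarith [ht₂.1, ht₁.2, arcLen_lt_one a b]⟩)
  rw [ht, hGt₂] at hGt₁
  linarith

lemma volume_arc_inter_preimage_le {a b : 𝕋} {x : ℝ} (hx : (x : 𝕋) = a)
    (hwrap : G (x + arcLen a b) ≤ G x + 1) {X : Set 𝕋} (hX : MeasurableSet X) :
    volume (arc a b ∩ T ⁻¹' X) ≤ ENNReal.ofReal K⁻¹ * volume X := by
  set ℓ := arcLen a b
  calc volume (arc a b ∩ T ⁻¹' X)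
      = volume (Icc x (x + ℓ) ∩ G ⁻¹' ((↑) ⁻¹' X)) := by
        rw [AddCircle.add_projection_respects_measure 1 (x + ℓ - 1)
          ((measurableSet_arc a b).inter (hX.preimage hG.continuous_circleMap.measurable)),
          sub_add_cancel, preimage_inter, inter_right_comm, preimage_arc_inter_Ioc hx,
          hG.preimage_coe_preimage]
    _ ≤ ENNReal.ofReal K⁻¹ * volume ((↑) ⁻¹' X ∩ Ioc (G x) (G (x + ℓ))) :=
        hG.volume_Icc_inter_preimage_le _
    _ ≤ ENNReal.ofReal K⁻¹ * volume ((↑) ⁻¹' X ∩ Ioc (G x) (G x + 1)) := by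
        gcongr
    _ = ENNReal.ofReal K⁻¹ * volume X := by
        rw [← AddCircle.add_projection_respects_measure 1 _ hX]

lemma volume_survivalSet_arc_le {p : ℕ} {a b : 𝕋} (hF : IsPFlower T p (arc a b)) (n : ℕ) :
    volume (survivalSet T (arc a b) n) ≤ ENNReal.ofReal K⁻¹ ^ n := by
  obtain ⟨-, τ, D, hsel, -, hFτ⟩ := hF
  have hwrap := hG.le_add_one_of_arc_eq_closure_range hsel hFτ (coe_rep01 a)
  calc volume (survivalSet T (arc a b) n)
      ≤ ENNReal.ofReal K⁻¹ ^ n * volume (arc a b) :=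
        measure_survivalSet_le (fun _ hX => hG.volume_arc_inter_preimage_le (coe_rep01 a) hwrap hX)
          hG.continuous_circleMap.measurable (measurableSet_arc a b) n
    _ ≤ ENNReal.ofReal K⁻¹ ^ n := by
        refine mul_le_of_le_one_right' ((measure_mono (subset_univ _)).trans ?_)
        rw [UnitAddCircle.measure_univ]

lemma norm_setIntegral_survivalSet_arc_le {p : ℕ} {a b : 𝕋} (hF : IsPFlower T p (arc a b))
    {g : 𝕋 → ℝ} {C : ℝ} (hC : ∀ z, |g z| ≤ C) (n : ℕ) :
    ‖∫ z in survivalSet T (arc a b) n, g z‖ ≤ C * K⁻¹ ^ n := by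
  calc ‖∫ z in survivalSet T (arc a b) n, g z‖
      ≤ C * volume.real (survivalSet T (arc a b) n) :=
        norm_setIntegral_le_of_norm_le_const (measure_lt_top _ _) fun z _ => hC z
    _ ≤ C * K⁻¹ ^ n := by
        have hC0 : 0 ≤ C := (abs_nonneg _).trans (hC 0)
        gcongr
        simpa [Measure.real, ENNReal.toReal_ofReal (inv_nonneg.2 hG.pos.le)] using
          ENNReal.toReal_mono (by simp) (hG.volume_survivalSet_arc_le hF n)

lemma continuousAt_setIntegral_survivalSet_arc {g : 𝕋 → ℝ} {C : ℝ} (hg : AEStronglyMeasurable g)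
    (hC : ∀ z, |g z| ≤ C) {X : Type*} [TopologicalSpace X] {a b : X → 𝕋} {x₀ : X}
    (ha : ContinuousAt a x₀) (hb : ContinuousAt b x₀) (hne : a x₀ ≠ b x₀) (n : ℕ) :
    ContinuousAt (fun x => ∫ z in survivalSet T (arc (a x) (b x)) n, g z) x₀ := by
  have hd : Tendsto (fun x => dist (a x) (a x₀)) (𝓝 x₀) (𝓝 0) :=
    tendsto_iff_dist_tendsto_zero.1 ha
  have hℓ : Tendsto (fun x => arcLen (a x) (b x) - arcLen (a x₀) (b x₀)) (𝓝 x₀) (𝓝 0) :=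
    tendsto_sub_nhds_zero_iff.2 (continuousAt_arcLen ha hb hne)
  have hc : (k * ENNReal.ofReal K⁻¹ : ℝ≥0∞) ≠ ∞ :=
    ENNReal.mul_ne_top (ENNReal.natCast_ne_top k) ENNReal.ofReal_ne_top
  have hT := hG.continuous_circleMap.measurable
  have harc : ∀ x, MeasurableSet (arc (a x) (b x)) := fun _ => measurableSet_arc _ _
  have harc₀ : ∀ _ : X, MeasurableSet (arc (a x₀) (b x₀)) := fun _ => measurableSet_arc _ _
  refine continuousAt_setIntegral_of_tendsto_measure_sdiff hg hC
    (fun x => (harc x).survivalSet hT n)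
    (tendsto_measure_survivalSet_sdiff hc (fun _ => hG.volume_preimage_le) hT harc harc₀
      (tendsto_volume_arc_sdiff_arc hd hℓ) n)
    (tendsto_measure_survivalSet_sdiff hc (fun _ => hG.volume_preimage_le) hT harc₀ harc
      (tendsto_volume_arc_sdiff_arc (by simpa only [dist_comm] using hd) (by simpa using hℓ.neg)) n)

end IsExpandingLift

lemma derivCirc_eq_deriv (f : 𝕋 → ℝ) (z : 𝕋) :
    derivCirc f z = deriv (fun t : ℝ => f t) (rep01 z) := by
  have h : (fun t : ℝ => f (z + t)) = fun t => (fun s : ℝ => f s) (rep01 z + t) := by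
    funext t
    show f (z + t) = f ((rep01 z + t : ℝ) : 𝕋)
    rw [AddCircle.coe_add, coe_rep01]
  simpa [derivCirc, h] using deriv_comp_const_add (fun s : ℝ => f s) (rep01 z) 0

lemma measurable_derivCirc (f : 𝕋 → ℝ) : Measurable (derivCirc f) := by
  have hrep : Measurable rep01 :=
    measurable_subtype_coe.comp (AddCircle.measurableEquivIco (1 : ℝ) 0).measurable
  rw [funext (derivCirc_eq_deriv f)]
  exact (measurable_deriv _).comp hrep

lemma LipschitzWith.abs_derivCirc_le {f : 𝕋 → ℝ} {C : ℝ≥0} (hf : LipschitzWith C f) (z : 𝕋) :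
    |derivCirc f z| ≤ C := by
  have hshift : LipschitzWith 1 fun t : ℝ => z + (t : 𝕋) :=
    LipschitzWith.of_dist_le_mul fun s t => by
      simpa [Real.dist_eq] using dist_coe_le s t
  have h := norm_deriv_le_of_lipschitz (x₀ := 0) (hf.comp hshift)
  rwa [mul_one, Real.norm_eq_abs] at h

lemma integral_mul_escapeTime {T : 𝕋 → 𝕋} (hT : Measurable T) {F : Set 𝕋} (hF : MeasurableSet F)
    {g : 𝕋 → ℝ} {C : ℝ} (hg : AEStronglyMeasurable g) (hC : ∀ z, |g z| ≤ C) {r : ℝ≥0∞}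
    (hr : r < 1) (hvol : ∀ n, volume (survivalSet T F n) ≤ r ^ n) :
    ∫ z, g z * escapeTime T F z = ∑' n, ∫ z in survivalSet T F n, g z := by
  refine integral_mul_tsum_indicator hg hC (hF.survivalSet hT) (ne_top_of_le_ne_top ?_
    (ENNReal.tsum_le_tsum hvol))
  rw [ENNReal.tsum_geometric]
  exact ENNReal.inv_ne_top.2 (tsub_pos_of_lt hr).ne'

theorem integral_deriv_escapeTime_continuous_general
    (T : 𝕋 → 𝕋) (hT : OPLExpanding T)
    (f : 𝕋 → ℝ) (hf : LipschitzReal f)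
    (a b : 𝕋 → 𝕋)
    (ha : Continuous a ∧ Function.Bijective a ∧ HasDegree a 1)
    (hb : Continuous b ∧ Function.Bijective b ∧ HasDegree b 1)
    (hfam : ∀ γ : 𝕋, IsPFlower T 1 (arc (a γ) (b γ))) :
    Continuous (fun γ : 𝕋 => ∫ z : 𝕋, derivCirc f z * escapeTime T (arc (a γ) (b γ)) z) := by
  obtain ⟨hexp, -, k, hk, hdeg⟩ := hT
  lift k to ℕ using (by omega)
  obtain ⟨G, K, hG⟩ := hexp.exists_isExpandingLift (by omega) hdeg
  obtain ⟨C, hC⟩ := hf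
  have hg := (measurable_derivCirc f).aestronglyMeasurable (μ := volume)
  have hK : K⁻¹ < 1 := inv_lt_one_of_one_lt₀ hG.one_lt
  have hterm : ∀ n, Continuous fun γ =>
      ∫ z in survivalSet T (arc (a γ) (b γ)) n, derivCirc f z := fun n =>
    continuous_iff_continuousAt.2 fun γ => hG.continuousAt_setIntegral_survivalSet_arc hg
      hC.abs_derivCirc_le ha.1.continuousAt hb.1.continuousAt (hfam γ).ne n
  have hsum : Summable fun n : ℕ => (C : ℝ) * K⁻¹ ^ n :=
    (summable_geometric_of_lt_one (inv_nonneg.2 hG.pos.le) hK).mul_left _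
  refine (continuous_tsum hterm hsum fun n γ =>
    hG.norm_setIntegral_survivalSet_arc_le (hfam γ) hC.abs_derivCirc_le n).congr fun γ => ?_
  exact (integral_mul_escapeTime hG.continuous_circleMap.measurable (measurableSet_arc _ _) hg
    hC.abs_derivCirc_le (ENNReal.ofReal_lt_one.2 hK) (hG.volume_survivalSet_arc_le (hfam γ))).symm

/-- **Theorem.** For a Lipschitz `f : 𝕋 → ℝ` and the family `(F_γ)` of all `1`-flowers of
an orientation-preserving Lipschitz expanding map `T`, the map
`γ ↦ ∫ f' e_{F_γ} dLeb` is continuous on the circle. -/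
theorem integral_deriv_escapeTime_continuous
    (T : 𝕋 → 𝕋) (hT : OPLExpanding T)
    (f : 𝕋 → ℝ) (hf : LipschitzReal f)
    (a b : 𝕋 → 𝕋)
    (ha : Continuous a ∧ Function.Bijective a ∧ HasDegree a 1)
    (hb : Continuous b ∧ Function.Bijective b ∧ HasDegree b 1)
    (hfam : ∀ γ : 𝕋, IsPFlower T 1 (arc (a γ) (b γ)))
    (hall : ∀ F : Set 𝕋, IsPFlower T 1 F → ∃ γ : 𝕋, F = arc (a γ) (b γ)) :
    Continuous (fun γ : 𝕋 => ∫ z : 𝕋, derivCirc f z * escapeTime T (arc (a γ) (b γ)) z) :=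
  integral_deriv_escapeTime_continuous_general T hT f hf a b ha hb hfam
end

section
/- An orientation-preserving Lipschitz map T : 𝕋 → 𝕋 is expanding if and only if there exists K > 1 such that T'(x) ≥ K for Lebesgue almost every x ∈ 𝕋. -/
open Filter MeasureTheory Set Topology
open scoped ENNReal NNReal

/-!
Everything is read off a lift `G : ℝ → ℝ` of `T`. A lift of a `C`-Lipschitz circle map is
`C`-Lipschitz, and the derivative of `T` at `↑s` is `G'(s)`.

If `T` expands distances by `K` below scale `L`, then `|G (s + t) - G s| ≥ K t` for `0 < t < L`.
The increment `G (s + t) - G s` is continuous and nonzero on the connected set `ℝ × (0, L)`, and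
it is positive somewhere because `G 1 - G 0` is the degree; so it is positive, and `G' ≥ K`
wherever `G` is differentiable, i.e. almost everywhere by Rademacher's theorem.

Conversely, `G` is absolutely continuous, so `G' ≥ K` a.e. integrates to
`G b - G a ≥ K (b - a)`; for nearby points this increment is below `1/2`, hence equals the
distance of the images on the circle.
-/

theorem lipschitzWith_of_eventually_dist_le {X : Type*} [PseudoMetricSpace X] {f : ℝ → X}
    {C : ℝ≥0} (hf : Continuous f) (h : ∀ x, ∀ᶠ z in 𝓝 x, dist (f z) (f x) ≤ C * dist z x) :
    LipschitzWith C f := by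
  suffices key : ∀ a b, a ≤ b → dist (f b) (f a) ≤ C * (b - a) by
    refine LipschitzWith.of_dist_le_mul fun x y => ?_
    rcases le_total x y with hxy | hyx
    · rw [dist_comm, dist_comm x, Real.dist_eq, abs_of_nonneg (sub_nonneg.2 hxy)]
      exact key x y hxy
    · rw [Real.dist_eq, abs_of_nonneg (sub_nonneg.2 hyx)]
      exact key y x hyx
  intro a b hab
  refine image_le_of_liminf_slope_right_le_deriv_boundary (f := fun z => dist (f z) (f a))
    (B := fun z => C * (z - a)) (B' := fun _ => C) (by fun_prop) (by simp) (by fun_prop)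
    (fun x _ => ((hasDerivAt_id x).sub_const a).const_mul (C : ℝ) |>.hasDerivWithinAt
      |>.congr_deriv (mul_one _)) ?_ ⟨hab, le_rfl⟩
  intro x _ r hr
  have hslope : ∀ᶠ z in 𝓝[>] x, slope (fun z => dist (f z) (f a)) x z < r := by
    filter_upwards [(h x).filter_mono nhdsWithin_le_nhds, self_mem_nhdsWithin] with z hz hxz
    have hxz' : 0 < z - x := sub_pos.2 hxz
    rw [Real.dist_eq, abs_of_pos hxz'] at hz
    rw [slope_def_field, div_lt_iff₀ hxz']
    calc dist (f z) (f a) - dist (f x) (f a) ≤ dist (f z) (f x) := by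
          linarith [dist_triangle (f z) (f x) (f a)]
      _ ≤ C * (z - x) := hz
      _ < r * (z - x) := mul_lt_mul_of_pos_right hr hxz'
  exact hslope.frequently

theorem IsPreconnected.pos_of_ne_zero {X : Type*} [TopologicalSpace X] {S : Set X}
    (hS : IsPreconnected S) {f : X → ℝ} (hf : ContinuousOn f S) (hne : ∀ x ∈ S, f x ≠ 0)
    {p : X} (hp : p ∈ S) (hpos : 0 < f p) {x : X} (hx : x ∈ S) : 0 < f x := by
  by_contra! hneg
  obtain ⟨z, hz, hz0⟩ := hS.intermediate_value hx hp hf ⟨hneg, hpos.le⟩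
  exact hne z hz hz0

theorem exists_lt_map_add_of_lt_map_mul {f : ℝ → ℝ} {h : ℝ} {n : ℕ}
    (hlt : f 0 < f (n * h)) : ∃ s, f s < f (s + h) := by
  by_contra! hle
  have : ∀ m : ℕ, f (m * h) ≤ f 0 := by
    intro m
    induction m with
    | zero => simp
    | succ m ih =>
      rw [Nat.cast_succ, add_one_mul]
      exact (hle _).trans ih
  exact (this n).not_gt hlt

theorem hasDerivAt_comp_const_add_iff {𝕜 F : Type*} [NontriviallyNormedField 𝕜]
    [NormedAddCommGroup F] [NormedSpace 𝕜 F] {f : 𝕜 → F} {f' : F} (a x : 𝕜) :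
    HasDerivAt (fun t => f (a + t)) f' x ↔ HasDerivAt f f' (a + x) :=
  ⟨fun h => by
    simpa only [add_neg_cancel_left] using HasDerivAt.comp_const_add (-a) (a + x)
      (f := fun t => f (a + t)) (by rwa [neg_add_cancel_left]),
    HasDerivAt.comp_const_add a x⟩

theorem le_of_hasDerivAt_of_eventually_mul_le_sub {f : ℝ → ℝ} {d K s : ℝ}
    (hd : HasDerivAt f d s) (h : ∀ᶠ t in 𝓝[>] 0, K * t ≤ f (s + t) - f s) : K ≤ d := by
  refine ge_of_tendsto hd.tendsto_slope_zero_right ?_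
  filter_upwards [h, self_mem_nhdsWithin] with t ht htpos
  rw [smul_eq_mul, le_inv_mul_iff₀ htpos, mul_comm]
  exact ht

theorem LipschitzWith.mul_sub_le_sub_of_ae_le_deriv {f : ℝ → ℝ} {C : ℝ≥0} {K : ℝ}
    (hf : LipschitzWith C f) (h : ∀ᵐ x, K ≤ deriv f x) {a b : ℝ} (hab : a ≤ b) :
    K * (b - a) ≤ f b - f a := by
  have hac := (hf.lipschitzOnWith (s := uIcc a b)).absolutelyContinuousOnInterval
  rw [← hac.integral_deriv_eq_sub]
  calc K * (b - a) = ∫ _ in a..b, K := by simp [mul_comm]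
    _ ≤ ∫ x in a..b, deriv f x :=
      intervalIntegral.integral_mono_ae hab intervalIntegrable_const hac.intervalIntegrable_deriv h

theorem repSym_coe {u : ℝ} (hu : |u| < 1 / 2) : repSym (u : 𝕋) = u := by
  rw [repSym, AddCircle.equivIco_coe_eq]
  rw [abs_lt] at hu
  constructor <;> linarith

namespace UnitAddCircle

theorem dist_coe_le_abs (a b : ℝ) : dist (a : 𝕋) b ≤ |a - b| := by
  rw [dist_eq_norm, ← AddCircle.coe_sub]
  exact QuotientAddGroup.norm_mk_le_norm

theorem dist_coe_eq_abs {a b : ℝ} (h : |a - b| ≤ 1 / 2) : dist (a : 𝕋) b = |a - b| := by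
  rw [dist_eq_norm, ← AddCircle.coe_sub]
  exact (AddCircle.norm_coe_eq_abs_iff 1 one_ne_zero).2 (by simpa using h)

theorem exists_coe_eq_dist (x y : 𝕋) :
    ∃ a b : ℝ, (a : 𝕋) = x ∧ (b : 𝕋) = y ∧ |a - b| = dist x y := by
  obtain ⟨a, rfl⟩ := QuotientAddGroup.mk_surjective x
  obtain ⟨c, hc⟩ := QuotientAddGroup.mk_surjective (y - (a : 𝕋))
  have hround : ((c - round c : ℝ) : 𝕋) = c := by simp
  refine ⟨a, a + (c - round c), rfl, ?_, ?_⟩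
  · rw [AddCircle.coe_add, hround]
    exact add_eq_of_eq_sub' hc
  · rw [dist_comm, dist_eq_norm, ← hc, ← hround, UnitAddCircle.norm_eq]
    simp [abs_sub_comm]

theorem ae_coe_iff {P : 𝕋 → Prop} : (∀ᵐ x : 𝕋, P x) ↔ ∀ᵐ s : ℝ, P s := by
  constructor
  · intro h
    rw [← Measure.restrict_univ (μ := volume), ← iUnion_Ioc_intCast, ae_restrict_iUnion_iff]
    intro n
    exact (UnitAddCircle.measurePreserving_mk n).quasiMeasurePreserving.ae h
  · intro h
    have hIoc : ∀ᵐ s : Ioc (0 : ℝ) (0 + 1) ∂(Measure.comap Subtype.val volume), P s :=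
      (ae_restrict_iff_subtype measurableSet_Ioc).1 (ae_restrict_of_ae h)
    filter_upwards [(AddCircle.measurePreserving_equivIoc 1).quasiMeasurePreserving.ae hIoc]
      with x hx
    rwa [AddCircle.coe_equivIoc] at hx

end UnitAddCircle

namespace IsLift

variable {T : 𝕋 → 𝕋} {G : ℝ → ℝ}

theorem dist_apply_coe_le (hG : IsLift T G) (a b : ℝ) : dist (T a) (T b) ≤ |G a - G b| := by
  rw [hG.2, hG.2]
  exact UnitAddCircle.dist_coe_le_abs _ _

theorem lipschitzWith {C : ℝ≥0} (hG : IsLift T G) (hT : LipschitzWith C T) :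
    LipschitzWith C G := by
  refine lipschitzWith_of_eventually_dist_le hG.1 fun x => ?_
  filter_upwards [Metric.continuous_iff'.1 hG.1 x (1 / 2) one_half_pos] with z hz
  rw [Real.dist_eq] at hz ⊢
  calc |G z - G x| = dist (T z) (T x) := by
        rw [hG.2, hG.2, UnitAddCircle.dist_coe_eq_abs hz.le]
    _ ≤ C * dist (z : 𝕋) x := hT.dist_le_mul _ _
    _ ≤ C * |z - x| := by gcongr; exact UnitAddCircle.dist_coe_le_abs z x

theorem hasDerivCircMap_coe_iff (hG : IsLift T G) (s d : ℝ) :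
    HasDerivCircMap T s d ↔ HasDerivAt G d s := by
  have hcont : ContinuousAt (fun t => G (s + t)) 0 := by
    exact (hG.1.comp (continuous_const_add s)).continuousAt
  have hnear : (fun t : ℝ => repSym (T ((s : 𝕋) + (t : 𝕋)) - T s)) =ᶠ[𝓝 0]
      fun t => G (s + t) - G s := by
    filter_upwards [Metric.continuousAt_iff'.1 hcont (1 / 2) one_half_pos] with t ht
    rw [← AddCircle.coe_add, hG.2, hG.2, ← AddCircle.coe_sub]
    rw [add_zero, Real.dist_eq] at ht
    exact repSym_coe ht
  rw [HasDerivCircMap, hnear.hasDerivAt_iff, hasDerivAt_sub_const_iff,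
    hasDerivAt_comp_const_add_iff, add_zero]

theorem mul_abs_le_abs_sub_of_expandingWith {K ε : ℝ} (hG : IsLift T G)
    (hexp : ∀ x y : 𝕋, dist x y < ε → K * dist x y ≤ dist (T x) (T y)) (s : ℝ) {t : ℝ}
    (htε : |t| < ε) (ht : |t| ≤ 1 / 2) : K * |t| ≤ |G (s + t) - G s| := by
  have hdist : dist ((s + t : ℝ) : 𝕋) s = |t| := by
    rw [UnitAddCircle.dist_coe_eq_abs (by rwa [add_sub_cancel_left]), add_sub_cancel_left]
  calc K * |t| ≤ dist (T (s + t : ℝ)) (T s) := hdist ▸ hexp _ _ (hdist ▸ htε)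
    _ ≤ |G (s + t) - G s| := hG.dist_apply_coe_le _ _

theorem exists_mul_le_sub_of_expandingWith {K : ℝ} (hG : IsLift T G) (h01 : G 0 < G 1)
    (hK : 0 < K) (hexp : ExpandingWith T K) :
    ∃ L > 0, ∀ s t, 0 < t → t < L → K * t ≤ G (s + t) - G s := by
  obtain ⟨ε, hε, hexp⟩ := hexp
  set L := min ε (1 / 2)
  have hL : 0 < L := lt_min hε one_half_pos
  have hexpand : ∀ s t, 0 < t → t < L → K * t ≤ |G (s + t) - G s| := fun s t ht htL => by
    simpa [abs_of_pos ht] using hG.mul_abs_le_abs_sub_of_expandingWith hexp s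
      (t := t) (by rw [abs_of_pos ht]; exact htL.trans_le (min_le_left _ _))
      (by rw [abs_of_pos ht]; exact htL.le.trans (min_le_right _ _))
  have hne : ∀ p ∈ (univ : Set ℝ) ×ˢ Ioo 0 L, G (p.1 + p.2) - G p.1 ≠ 0 :=
    fun p ⟨_, hp, hpL⟩ => abs_pos.1 ((mul_pos hK hp).trans_le (hexpand p.1 p.2 hp hpL))
  obtain ⟨n, hn⟩ := exists_nat_one_div_lt hL
  obtain ⟨s₀, hs₀⟩ := exists_lt_map_add_of_lt_map_mul (f := G) (h := 1 / (n + 1))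
    (n := n + 1) (by rwa [Nat.cast_succ, mul_one_div_cancel (by positivity)])
  have hpos : ∀ s t, 0 < t → t < L → 0 < G (s + t) - G s := fun s t ht htL =>
    (isPreconnected_univ.prod isPreconnected_Ioo).pos_of_ne_zero
      (by have := hG.1; fun_prop) hne (p := (s₀, 1 / (n + 1))) ⟨trivial, by positivity, hn⟩
      (sub_pos.2 hs₀) (x := (s, t)) ⟨trivial, ht, htL⟩
  exact ⟨L, hL, fun s t ht htL => abs_of_pos (hpos s t ht htL) ▸ hexpand s t ht htL⟩

theorem ae_exists_hasDerivCircMap_ge_of_expandingWith {C : ℝ≥0} {K : ℝ} (hG : IsLift T G)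
    (hGlip : LipschitzWith C G) (h01 : G 0 < G 1) (hK : 0 < K) (hexp : ExpandingWith T K) :
    ∀ᵐ x : 𝕋, ∃ d, HasDerivCircMap T x d ∧ K ≤ d := by
  obtain ⟨L, hL, hgrowth⟩ := hG.exists_mul_le_sub_of_expandingWith h01 hK hexp
  refine UnitAddCircle.ae_coe_iff.2 ?_
  filter_upwards [hGlip.ae_differentiableAt] with s hs
  refine ⟨deriv G s, (hG.hasDerivCircMap_coe_iff s _).2 hs.hasDerivAt,
    le_of_hasDerivAt_of_eventually_mul_le_sub hs.hasDerivAt ?_⟩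
  filter_upwards [Ioo_mem_nhdsGT hL] with t ht
  exact hgrowth s t ht.1 ht.2

theorem expandingWith_of_mul_sub_le {C : ℝ≥0} {K : ℝ} (hG : IsLift T G)
    (hGlip : LipschitzWith C G) (hgrowth : ∀ a b, a ≤ b → K * (b - a) ≤ G b - G a) :
    ExpandingWith T K := by
  refine ⟨1 / (2 * (C + 1)), by positivity, fun x y hxy => ?_⟩
  obtain ⟨a, b, rfl, rfl, hab⟩ := UnitAddCircle.exists_coe_eq_dist x y
  have hexpand : K * |a - b| ≤ |G a - G b| := by
    rcases le_total a b with h | h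
    · rw [abs_sub_comm, abs_of_nonneg (sub_nonneg.2 h), abs_sub_comm]
      exact (hgrowth a b h).trans (le_abs_self _)
    · rw [abs_of_nonneg (sub_nonneg.2 h)]
      exact (hgrowth b a h).trans (le_abs_self _)
  have hsmall : |G a - G b| ≤ 1 / 2 := by
    calc |G a - G b| ≤ C * |a - b| := by simpa [Real.dist_eq] using hGlip.dist_le_mul a b
      _ ≤ C * (1 / (2 * (C + 1))) := by rw [hab]; gcongr
      _ ≤ 1 / 2 := by
        rw [mul_one_div, div_le_div_iff₀ (by positivity) two_pos]
        linarith
  rwa [hG.2, hG.2, UnitAddCircle.dist_coe_eq_abs hsmall, ← hab]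

end IsLift

theorem expanding_iff_ae_deriv_ge_general
    (T : 𝕋 → 𝕋) (hL : LipschitzCirc T)
    (hdeg : ∃ k : ℤ, 1 ≤ k ∧ HasDegree T k) :
    Expanding T ↔
      ∃ K : ℝ, 1 < K ∧ ∀ᵐ x : 𝕋, ∃ d : ℝ, HasDerivCircMap T x d ∧ K ≤ d := by
  obtain ⟨k, hk, G, hG, hper⟩ := hdeg
  obtain ⟨C, hT⟩ := hL
  have hGlip := hG.lipschitzWith hT
  constructor
  · rintro ⟨-, K, hK, hexp⟩
    have h01 : G 0 < G 1 := by
      have : (1 : ℝ) ≤ k := by exact_mod_cast hk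
      linarith [zero_add (1 : ℝ) ▸ hper 0]
    exact ⟨K, hK, hG.ae_exists_hasDerivCircMap_ge_of_expandingWith hGlip h01 (by linarith) hexp⟩
  · rintro ⟨K, hK, hae⟩
    have hderiv : ∀ᵐ s : ℝ, K ≤ deriv G s := by
      filter_upwards [UnitAddCircle.ae_coe_iff.1 hae] with s ⟨d, hd, hKd⟩
      rwa [((hG.hasDerivCircMap_coe_iff s d).1 hd).deriv]
    exact ⟨hT.continuous, K, hK, hG.expandingWith_of_mul_sub_le hGlip
      fun a b hab => hGlip.mul_sub_le_sub_of_ae_le_deriv hderiv hab⟩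

/-- **Theorem.** An orientation-preserving Lipschitz map `T : 𝕋 → 𝕋` is expanding if and
only if there exists `K > 1` such that `T'(x) ≥ K` for Lebesgue almost every `x`. -/
theorem expanding_iff_ae_deriv_ge
    (T : 𝕋 → 𝕋) (hc : Continuous T) (hL : LipschitzCirc T)
    (hdeg : ∃ k : ℤ, 1 ≤ k ∧ HasDegree T k) :
    Expanding T ↔
      ∃ K : ℝ, 1 < K ∧ ∀ᵐ x : 𝕋, ∃ d : ℝ, HasDerivCircMap T x d ∧ K ≤ d :=
  expanding_iff_ae_deriv_ge_general T hL hdeg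
end

section
/- Let T : 𝕋 → 𝕋 be an orientation-preserving Lipschitz expanding map, F a flower with pre-image selector τ, and f : 𝕋 → ℝ Lipschitz. If φ : 𝕋 → ℝ is Lipschitz and f + φ − φ∘T is constant on F, then the series Σ_{n≥1} (f∘τⁿ)' converges in L^∞(𝕋) and φ' = Σ_{n≥1} (f∘τⁿ)' Lebesgue-a.e. -/
open Filter MeasureTheory Set Topology
open scoped ENNReal NNReal

/-! Since `T ∘ τ = id` and `τ` takes values in the flower, flattening gives
`φ = f ∘ τ - c + φ ∘ τ`, hence `φ = ∑_{n<N} (f ∘ τ^[n+1] - c) + φ ∘ τ^[N]`.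
Since `τ` is injective, for almost every `z` the `τ`-orbit of `z` avoids the finite set of
discontinuities of `τ`; along it `τ` is locally a right inverse of a map expanding by `K`, so `τ^[n]` is
`K⁻¹ ^ n`-Lipschitz near `z`. By Rademacher each `g ∘ τ^[n]` with `g` Lipschitz is then
differentiable a.e. with `|(g ∘ τ^[n])'| ≤ Lip(g) K⁻¹ ^ n`, and differentiating the identity
bounds `|φ' - ∑_{n<N} (f ∘ τ^[n+1])'|` by `Lip(φ) K⁻¹ ^ N` almost everywhere. -/

open Metric

section Rademacher

variable {E F : Type*} [NormedAddCommGroup E] [NormedSpace ℝ E] [FiniteDimensional ℝ E]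
  [MeasurableSpace E] [BorelSpace E] [NormedAddCommGroup F] [NormedSpace ℝ F]
  [FiniteDimensional ℝ F] {μ : Measure E} [μ.IsAddHaarMeasure]

theorem ae_differentiableAt_of_ae_exists_lipschitzOnWith {f : E → F}
    (hf : ∀ᵐ x ∂μ, ∃ K, ∃ U ∈ 𝓝 x, LipschitzOnWith K f U) :
    ∀ᵐ x ∂μ, DifferentiableAt ℝ f x := by
  choose! K U hU hlip using fun x (hx : ∃ K, ∃ U ∈ 𝓝 x, LipschitzOnWith K f U) => hx
  obtain ⟨c, hcs, hc, hcover⟩ := TopologicalSpace.countable_cover_nhdsWithin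
    (f := fun x => interior (U x)) fun x hx =>
      mem_nhdsWithin_of_mem_nhds (interior_mem_nhds.2 (hU x hx))
  have hdiff : ∀ y ∈ c, ∀ᵐ x ∂μ, x ∈ interior (U y) → DifferentiableAt ℝ f x := fun y hy => by
    filter_upwards [((hlip y (hcs hy)).mono interior_subset).ae_differentiableWithinAt_of_mem]
      with x hx hxU
    exact (hx hxU).differentiableAt (isOpen_interior.mem_nhds hxU)
  filter_upwards [hf, (ae_ball_iff hc).2 hdiff] with x hxs hx
  obtain ⟨y, hy, hxy⟩ := mem_iUnion₂.1 (hcover hxs)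
  exact hx y hy hxy

end Rademacher

theorem LipschitzOnWith.exists_nhds_comp {X Y Z : Type*} [PseudoEMetricSpace X]
    [PseudoEMetricSpace Y] [PseudoEMetricSpace Z] {g : X → Y} {h : Y → Z} {Kg K : ℝ≥0}
    {x : X} {U : Set Y} (hh : LipschitzOnWith K h U) (hg : LipschitzWith Kg g)
    (hU : U ∈ 𝓝 (g x)) : ∃ V ∈ 𝓝 x, LipschitzOnWith (K * Kg) (h ∘ g) V :=
  ⟨g ⁻¹' U, hg.continuous.continuousAt.preimage_mem_nhds hU,
    hh.comp hg.lipschitzOnWith (mapsTo_preimage g U)⟩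

theorem tendsto_eLpNorm_top_of_ae_bound {α E : Type*} [MeasurableSpace α] {μ : Measure α}
    [NormedAddCommGroup E] {F : ℕ → α → E} {b : ℕ → ℝ} (hb : Tendsto b atTop (𝓝 0))
    (h : ∀ N, ∀ᵐ x ∂μ, ‖F N x‖ ≤ b N) :
    Tendsto (fun N => eLpNorm (F N) ⊤ μ) atTop (𝓝 0) := by
  refine tendsto_of_tendsto_of_tendsto_of_le_of_le tendsto_const_nhds
    (by simpa using ENNReal.tendsto_ofReal hb) (fun _ => bot_le) fun N => ?_
  rw [eLpNorm_exponent_top]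
  exact eLpNormEssSup_le_of_ae_bound (h N)

theorem eq_tsum_of_norm_sub_sum_le {E : Type*} [NormedAddCommGroup E] {u : ℕ → E} {a : E}
    {b : ℕ → ℝ} (hu : Summable u) (hb : Tendsto b atTop (𝓝 0))
    (h : ∀ N, ‖a - ∑ n ∈ Finset.range N, u n‖ ≤ b N) : a = ∑' n, u n := by
  refine tendsto_nhds_unique (tendsto_iff_norm_sub_tendsto_zero.2 ?_) hu.tendsto_sum_tsum_nat
  exact squeeze_zero (fun _ => norm_nonneg _) (fun N => by rw [norm_sub_rev]; exact h N) hb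

theorem tendsto_eLpNorm_top_sum_sub_tsum_and_ae_eq_tsum {α E : Type*} [MeasurableSpace α]
    {μ : Measure α} [NormedAddCommGroup E] {u : ℕ → α → E} {a : α → E} {C r : ℝ}
    (hr0 : 0 ≤ r) (hr1 : r < 1)
    (h : ∀ᵐ x ∂μ, Summable (u · x) ∧ ∀ N, ‖a x - ∑ n ∈ Finset.range N, u n x‖ ≤ C * r ^ N) :
    Tendsto (fun N => eLpNorm (fun x => ∑ n ∈ Finset.range N, u n x - ∑' n, u n x) ⊤ μ)
      atTop (𝓝 0) ∧ ∀ᵐ x ∂μ, a x = ∑' n, u n x := by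
  have hlim : Tendsto (fun N => C * r ^ N) atTop (𝓝 0) := by
    simpa using (tendsto_pow_atTop_nhds_zero_of_lt_one hr0 hr1).const_mul C
  have hsum : ∀ᵐ x ∂μ, a x = ∑' n, u n x :=
    h.mono fun x hx => eq_tsum_of_norm_sub_sum_le hx.1 hlim hx.2
  refine ⟨tendsto_eLpNorm_top_of_ae_bound hlim fun N => ?_, hsum⟩
  filter_upwards [h, hsum] with x hx hxsum
  rw [← hxsum, norm_sub_rev]
  exact hx.2 N

theorem ae_forall_iterate_notMem {α : Type*} [MeasurableSpace α] {μ : Measure α}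
    [NullSingletonClass μ] {τ : α → α} (hτ : Function.Injective τ) {D : Set α}
    (hD : D.Countable) : ∀ᵐ z ∂μ, ∀ j : ℕ, τ^[j] z ∉ D :=
  ae_all_iff.2 fun j =>
    measure_eq_zero_iff_ae_notMem.1 ((hD.preimage (hτ.iterate j)).measure_zero μ)

theorem eq_sum_add_iterate {α : Type*} {τ : α → α} {f φ : α → ℝ} {c : ℝ}
    (h : ∀ w, φ w = f (τ w) - c + φ (τ w)) (N : ℕ) (z : α) :
    φ z = ∑ n ∈ Finset.range N, (f (τ^[n + 1] z) - c) + φ (τ^[N] z) := by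
  induction N with
  | zero => simp
  | succ N ih => rw [Finset.sum_range_succ, Function.iterate_succ_apply', add_assoc, ← h, ih]

namespace UnitAddCircle

instance : NullSingletonClass (volume : Measure 𝕋) :=
  ⟨fun x => by simpa using AddCircle.volume_closedBall (T := 1) (x := x) 0⟩

theorem lipschitzWith_coe : LipschitzWith 1 ((↑) : ℝ → 𝕋) :=
  LipschitzWith.of_dist_le_mul fun s t => by
    rw [dist_eq_norm, dist_eq_norm, ← AddCircle.coe_sub, NNReal.coe_one, one_mul]
    exact QuotientAddGroup.norm_mk_le_norm

theorem lipschitzWith_add_coe (z : 𝕋) : LipschitzWith 1 (fun t : ℝ => z + (t : 𝕋)) := by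
  simpa only [mul_one, Function.comp_def] using
    (isometry_add_left z).lipschitz.comp lipschitzWith_coe

theorem quasiMeasurePreserving_coe :
    Measure.QuasiMeasurePreserving ((↑) : ℝ → 𝕋) volume volume := by
  refine ⟨AddCircle.measurable_mk', .mk fun s hs hs0 => ?_⟩
  rw [Measure.map_apply AddCircle.measurable_mk' hs, ← univ_inter (_ ⁻¹' s),
    ← iUnion_Ioc_intCast ℝ, iUnion_inter]
  refine measure_iUnion_null fun n => ?_
  rw [inter_comm, ← Measure.restrict_apply' measurableSet_Ioc,
    ← Measure.map_apply AddCircle.measurable_mk' hs,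
    (UnitAddCircle.measurePreserving_mk _).map_eq, hs0]

theorem ae_of_ae_coe_s17 {P : 𝕋 → Prop} (h : ∀ᵐ x : ℝ, P x) : ∀ᵐ z : 𝕋, P z := by
  have e := (AddCircle.measurePreserving_equivIoc 1 (a := 0)).symm
    (AddCircle.measurableEquivIoc 1 0)
  rw [← e.map_eq, (MeasurableEquiv.measurableEmbedding _).ae_map_iff]
  refine ((MeasurableEmbedding.subtype_coe measurableSet_Ioc).ae_map_iff
    (p := fun x : ℝ => P x)).1 ?_
  rw [map_comap_subtype_coe measurableSet_Ioc]
  exact ae_restrict_of_ae h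

theorem ae_differentiableAt_comp_add {h : 𝕋 → ℝ}
    (hh : ∀ᵐ z, ∃ K, ∃ U ∈ 𝓝 z, LipschitzOnWith K h U) :
    ∀ᵐ z : 𝕋, DifferentiableAt ℝ (fun t : ℝ => h (z + t)) 0 := by
  have hlift : ∀ᵐ x : ℝ, DifferentiableAt ℝ (fun y : ℝ => h y) x := by
    refine ae_differentiableAt_of_ae_exists_lipschitzOnWith ?_
    filter_upwards [quasiMeasurePreserving_coe.ae hh] with x ⟨K, U, hU, hlip⟩
    obtain ⟨V, hV, hlipV⟩ := hlip.exists_nhds_comp lipschitzWith_coe hU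
    exact ⟨_, V, hV, hlipV⟩
  refine ae_of_ae_coe_s17 ?_
  filter_upwards [hlift] with x hx
  simpa using (differentiableAt_iff_comp_const_add (b := x)).1 hx

theorem abs_derivCirc_le {h : 𝕋 → ℝ} {z : 𝕋} {K : ℝ≥0} {U : Set 𝕋} (hU : U ∈ 𝓝 z)
    (hh : LipschitzOnWith K h U) : |derivCirc h z| ≤ K := by
  obtain ⟨V, hV, hlipV⟩ :=
    hh.exists_nhds_comp (lipschitzWith_add_coe z) (x := 0) (by simpa using hU)
  have hbound := norm_deriv_le_of_lipschitzOn hV hlipV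
  rwa [mul_one, Real.norm_eq_abs] at hbound

theorem derivCirc_eq_sum_add_iterate {τ : 𝕋 → 𝕋} {f φ : 𝕋 → ℝ} {c : ℝ}
    (h : ∀ w, φ w = f (τ w) - c + φ (τ w)) {z : 𝕋} {N : ℕ}
    (hf : ∀ n, DifferentiableAt ℝ (fun t : ℝ => (f ∘ τ^[n]) (z + t)) 0)
    (hφ : DifferentiableAt ℝ (fun t : ℝ => (φ ∘ τ^[N]) (z + t)) 0) :
    derivCirc φ z =
      ∑ n ∈ Finset.range N, derivCirc (f ∘ τ^[n + 1]) z + derivCirc (φ ∘ τ^[N]) z := by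
  have hsum := (HasDerivAt.fun_sum fun n (_ : n ∈ Finset.range N) =>
    (hf (n + 1)).hasDerivAt.sub_const c).add hφ.hasDerivAt
  calc derivCirc φ z
      = deriv (fun t : ℝ => ∑ n ∈ Finset.range N, ((f ∘ τ^[n + 1]) (z + t) - c)
          + (φ ∘ τ^[N]) (z + t)) 0 :=
        congrArg (deriv · 0) (funext fun t => eq_sum_add_iterate h N (z + t))
    _ = _ := hsum.deriv

end UnitAddCircle

open UnitAddCircle

section Selector

variable {T τ : 𝕋 → 𝕋} {K : ℝ≥0}

theorem ExpandingWith.exists_nhds_lipschitzOnWith_rightInverse (hT : ExpandingWith T K)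
    (hK : 0 < K) (hτ : ∀ y, T (τ y) = y) {x : 𝕋} (hx : ContinuousAt τ x) :
    ∃ U ∈ 𝓝 x, LipschitzOnWith K⁻¹ τ U := by
  obtain ⟨ε, hε, hexp⟩ := hT
  refine ⟨τ ⁻¹' ball (τ x) (ε / 2), hx.preimage_mem_nhds (ball_mem_nhds _ (half_pos hε)),
    LipschitzOnWith.of_dist_le_mul fun y hy y' hy' => ?_⟩
  have hy : dist (τ y) (τ x) < ε / 2 := hy
  have hy' : dist (τ y') (τ x) < ε / 2 := hy'
  have hexpand := hexp (τ y) (τ y') (by linarith [dist_triangle_right (τ y) (τ y') (τ x)])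
  rw [hτ, hτ] at hexpand
  rw [NNReal.coe_inv, inv_mul_eq_div, le_div_iff₀' (NNReal.coe_pos.2 hK)]
  exact hexpand

theorem ExpandingWith.exists_nhds_lipschitzOnWith_iterate (hT : ExpandingWith T K)
    (hK : 0 < K) (hτ : ∀ y, T (τ y) = y) {z : 𝕋} :
    ∀ {n : ℕ}, (∀ j < n, ContinuousAt τ (τ^[j] z)) →
      ∃ U ∈ 𝓝 z, LipschitzOnWith (K⁻¹ ^ n) τ^[n] U
  | 0, _ => ⟨univ, univ_mem, by simpa using LipschitzWith.id (α := 𝕋)⟩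
  | n + 1, hz => by
    obtain ⟨U, hU, hlipU⟩ :=
      hT.exists_nhds_lipschitzOnWith_iterate hK hτ (n := n) fun j hj => hz j (by omega)
    obtain ⟨V, hV, hlipV⟩ :=
      hT.exists_nhds_lipschitzOnWith_rightInverse hK hτ (hz n n.lt_succ_self)
    refine ⟨U ∩ τ^[n] ⁻¹' V,
      inter_mem hU ((hlipU.continuousOn.continuousAt hU).preimage_mem_nhds hV), ?_⟩
    rw [Function.iterate_succ', pow_succ']
    exact hlipV.comp (hlipU.mono inter_subset_left) fun y hy => hy.2

theorem ExpandingWith.ae_differentiableAt_and_abs_derivCirc_comp_iterate_le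
    (hT : ExpandingWith T K) (hK : 0 < K) (hτ : ∀ y, T (τ y) = y) (hcont : ∀ᵐ z, ∀ j, ContinuousAt τ (τ^[j] z))
    {g : 𝕋 → ℝ} {C : ℝ≥0} (hg : LipschitzWith C g) :
    ∀ᵐ z, ∀ n, DifferentiableAt ℝ (fun t : ℝ => (g ∘ τ^[n]) (z + t)) 0 ∧
      |derivCirc (g ∘ τ^[n]) z| ≤ C * (K : ℝ)⁻¹ ^ n := by
  have hloc : ∀ᵐ z, ∀ n, ∃ U ∈ 𝓝 z, LipschitzOnWith (C * K⁻¹ ^ n) (g ∘ τ^[n]) U := by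
    filter_upwards [hcont] with z hz n
    obtain ⟨U, hU, hlip⟩ := hT.exists_nhds_lipschitzOnWith_iterate hK hτ fun j _ => hz j
    exact ⟨U, hU, hg.comp_lipschitzOnWith hlip⟩
  have hdiff : ∀ n, ∀ᵐ z, DifferentiableAt ℝ (fun t : ℝ => (g ∘ τ^[n]) (z + t)) 0 :=
    fun n => ae_differentiableAt_comp_add (hloc.mono fun z hz => ⟨_, hz n⟩)
  filter_upwards [hloc, ae_all_iff.2 hdiff] with z hzloc hzdiff n
  obtain ⟨U, hU, hlip⟩ := hzloc n
  exact ⟨hzdiff n, by simpa using abs_derivCirc_le hU hlip⟩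

theorem ExpandingWith.ae_summable_and_norm_derivCirc_sub_sum_le (hT : ExpandingWith T K)
    (hK : 1 < K) (hτ : ∀ y, T (τ y) = y) (hcont : ∀ᵐ z, ∀ j, ContinuousAt τ (τ^[j] z))
    {f φ : 𝕋 → ℝ} {Cf Cφ : ℝ≥0} {c : ℝ} (hf : LipschitzWith Cf f) (hφ : LipschitzWith Cφ φ)
    (hφτ : ∀ w, φ w = f (τ w) - c + φ (τ w)) :
    ∀ᵐ z, Summable (fun n => derivCirc (f ∘ τ^[n + 1]) z) ∧
      ∀ N, ‖derivCirc φ z - ∑ n ∈ Finset.range N, derivCirc (f ∘ τ^[n + 1]) z‖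
        ≤ Cφ * (K : ℝ)⁻¹ ^ N := by
  have hK0 : 0 < K := zero_lt_one.trans hK
  have hr1 : (K : ℝ)⁻¹ < 1 := inv_lt_one_of_one_lt₀ (mod_cast hK)
  filter_upwards [hT.ae_differentiableAt_and_abs_derivCirc_comp_iterate_le hK0 hτ hcont hf,
    hT.ae_differentiableAt_and_abs_derivCirc_comp_iterate_le hK0 hτ hcont hφ] with z hfz hφz
  have hgeom : Summable fun n : ℕ => (Cf : ℝ) * (K : ℝ)⁻¹ ^ (n + 1) :=
    (summable_nat_add_iff 1).2 ((summable_geometric_of_lt_one (by positivity) hr1).mul_left _)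
  refine ⟨hgeom.of_norm_bounded fun n => (Real.norm_eq_abs _).trans_le (hfz (n + 1)).2,
    fun N => ?_⟩
  rw [derivCirc_eq_sum_add_iterate hφτ (fun n => (hfz n).1) (hφz N).1, add_sub_cancel_left]
  exact (hφz N).2

end Selector

theorem flattening_deriv_series_general
    (T τ : 𝕋 → 𝕋) (D : Finset 𝕋)
    (hT : OPLExpanding T) (hτ : IsPreimageSelector T τ D)
    (f : 𝕋 → ℝ) (hf : LipschitzReal f)
    (φ : 𝕋 → ℝ) (hφ : LipschitzReal φ)
    (hconst : FlattensWith T f (closure (Set.range τ)) φ) :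
    Filter.Tendsto (fun N : ℕ =>
        eLpNorm (fun z : 𝕋 =>
          (∑ n ∈ Finset.range N, derivCirc (f ∘ τ^[n + 1]) z)
            - ∑' n : ℕ, derivCirc (f ∘ τ^[n + 1]) z) ⊤ volume)
      Filter.atTop (nhds 0) ∧
    ∀ᵐ z : 𝕋, derivCirc φ z = ∑' n : ℕ, derivCirc (f ∘ τ^[n + 1]) z := by
  obtain ⟨⟨-, K, hK1, hexp⟩, -, -⟩ := hT
  lift K to ℝ≥0 using zero_le_one.trans hK1.le
  obtain ⟨hTτ, hτcont, -⟩ := hτ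
  obtain ⟨Cf, hf⟩ := hf
  obtain ⟨Cφ, hφ⟩ := hφ
  obtain ⟨c, hc⟩ := hconst
  have hcont : ∀ᵐ z, ∀ j, ContinuousAt τ (τ^[j] z) :=
    (ae_forall_iterate_notMem (Function.LeftInverse.injective hTτ) D.countable_toSet).mono
      fun z hz j => hτcont _ (hz j)
  have hφτ : ∀ w, φ w = f (τ w) - c + φ (τ w) := fun w => by
    have hflat := hc (τ w) (subset_closure (mem_range_self w))
    rw [hTτ] at hflat
    linarith
  exact tendsto_eLpNorm_top_sum_sub_tsum_and_ae_eq_tsum (by positivity)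
    (inv_lt_one_of_one_lt₀ hK1) (hexp.ae_summable_and_norm_derivCirc_sub_sum_le
      (mod_cast hK1) hTτ hcont hf hφ hφτ)

/-- **Theorem.** If `φ` is Lipschitz and `f + φ - φ∘T` is constant on the flower
`F = closure(range τ)`, then the series `Σ_{n≥1} (f∘τⁿ)'` converges in `L^∞(𝕋)` and
`φ' = Σ_{n≥1} (f∘τⁿ)'` Lebesgue-a.e. -/
theorem flattening_deriv_series
    (T τ : 𝕋 → 𝕋) (D : Finset 𝕋)
    (hT : OPLExpanding T) (hτ : IsPreimageSelector T τ D) (hD : D.Nonempty)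
    (f : 𝕋 → ℝ) (hf : LipschitzReal f)
    (φ : 𝕋 → ℝ) (hφ : LipschitzReal φ)
    (hconst : FlattensWith T f (closure (Set.range τ)) φ) :
    Filter.Tendsto (fun N : ℕ =>
        eLpNorm (fun z : 𝕋 =>
          (∑ n ∈ Finset.range N, derivCirc (f ∘ τ^[n + 1]) z)
            - ∑' n : ℕ, derivCirc (f ∘ τ^[n + 1]) z) ⊤ volume)
      Filter.atTop (nhds 0) ∧
    ∀ᵐ z : 𝕋, derivCirc φ z = ∑' n : ℕ, derivCirc (f ∘ τ^[n + 1]) z :=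
  flattening_deriv_series_general T τ D hT hτ f hf φ hφ hconst
end
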